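/- arXiv:2404.06872 — 11 statements merged into one kernel-verified Lean document; each statement's English description precedes it below -/
import Mathlib

section
/- If α is a well-founded linear order, then the order 2^α (whose elements are formal sums 2^{α(n-1)}+...+2^{α(0)} with α(0)<...<α(n-1) in α, i.e., finite strictly decreasing sequences in α compared lexicographically with the largest exponent taking precedence) is well-founded. -/
/-- `2^α`: finite strictly decreasing sequences in `α` (largest exponent first). -/
def DecList (α : Type*) [LinearOrder α] : Type _ := {l : List α // l.Chain' (· > ·)}

/-- The lexicographic order on `2^α`, with the largest exponent taking precedence. -/
def TwoLt {α : Type*} [LinearOrder α] (σ τ : DecList α) : Prop :=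
  List.Lex (· < ·) σ.1 τ.1

-- `(DecList α, TwoLt)` is definitionally `(List.chains (· < ·), List.lex_chains (· < ·))`.
theorem wellFounded_twoLt {α : Type*} [LinearOrder α] [WellFoundedLT α] :
    WellFounded (TwoLt (α := α)) :=
  (wellFounded_lt (α := α)).list_chain'

/-- If `α` is well-founded (no infinite strictly descending sequence), then so is `2^α`. -/
theorem stmt0 {α : Type*} [LinearOrder α]
    (h : ∀ f : ℕ → α, ¬ ∀ n, f (n + 1) < f n) :
    ∀ F : ℕ → DecList α, ¬ ∀ n, TwoLt (F (n + 1)) (F n) := by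
  have : WellFoundedLT α :=
    ⟨wellFounded_iff_isEmpty_descending_chain.2 ⟨fun ⟨f, hf⟩ => h f hf⟩⟩
  intro F hF
  exact (wellFounded_iff_isEmpty_descending_chain.1 wellFounded_twoLt).false ⟨F, hF⟩
end

section
/- With L the reverse order on ℕ (i.e., i ≤_L j iff j ≤ i in ℕ), the order D_L(α) coincides with 2^α: the map sending a strictly increasing sequence ⟨x_0,...,x_{n-1}⟩ in α to the strictly decreasing sequence ⟨x_{n-1},...,x_0⟩ is an order isomorphism from D_L(α) onto 2^α. -/
/-- Finite sequences that are strictly increasing with respect to the relation `lt`. -/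
def IncList {α : Type*} (lt : α → α → Prop) : Type _ := {l : List α // l.Chain' lt}

/-- `π` is the family of permutations determined by the linear order `Lle` on `ℕ`:
`π n i ≤ π n j` (in `ℕ`) iff `i ≤_L j`. -/
def PermOf (Lle : ℕ → ℕ → Prop) (π : ∀ n, Equiv.Perm (Fin n)) : Prop :=
  ∀ n, ∀ i j : Fin n, (((π n i : ℕ) ≤ (π n j : ℕ)) ↔ Lle (i : ℕ) (j : ℕ))

/-- The permuted lexicographic strict order on `D_L(α)` determined by the
permutations `π`:  `σ < τ` iff either the permuted readings first differ at a
position where `σ`'s entry is `lt`-smaller, or the reading of `σ` is a proper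
initial segment of that of `τ`. -/
def DLt {α : Type*} (lt : α → α → Prop) (π : ∀ n, Equiv.Perm (Fin n))
    (σ τ : IncList lt) : Prop :=
  (∃ j : ℕ, ∃ hs : j < σ.1.length, ∃ ht : j < τ.1.length,
      lt (σ.1.get (π σ.1.length ⟨j, hs⟩)) (τ.1.get (π τ.1.length ⟨j, ht⟩)) ∧
      ∀ i : ℕ, ∀ his : i < σ.1.length, ∀ hit : i < τ.1.length, i < j →
        σ.1.get (π σ.1.length ⟨i, his⟩) = τ.1.get (π τ.1.length ⟨i, hit⟩))
  ∨ (σ.1.length < τ.1.length ∧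
      ∀ i : ℕ, ∀ his : i < σ.1.length, ∀ hit : i < τ.1.length,
        σ.1.get (π σ.1.length ⟨i, his⟩) = τ.1.get (π τ.1.length ⟨i, hit⟩))

/-!
For the reverse order on `ℕ` the permutations are forced: `π n` is the unique order isomorphism
`Fin n ≃o (Fin n)ᵒᵈ`, namely `Fin.rev`. Hence `D_L` compares two sequences by reading each from
its last entry, i.e. by comparing their reversals in the ordinary lexicographic order, which is
the order of `2^α`.
-/

theorem PermOf.apply_eq_rev {π : ∀ n, Equiv.Perm (Fin n)} (hπ : PermOf (fun i j => j ≤ i) π)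
    (n : ℕ) (i : Fin n) : π n i = i.rev := by
  let e : Fin n ≃o (Fin n)ᵒᵈ :=
    { toEquiv := (π n).trans OrderDual.toDual
      map_rel_iff' := fun {i j} => (hπ n j i).trans Fin.le_def.symm }
  exact congrArg OrderDual.ofDual (DFunLike.congr_fun (Subsingleton.elim e Fin.revOrderIso.symm) i)

def permutedReading {α : Type*} (π : ∀ n, Equiv.Perm (Fin n)) (l : List α) : List α :=
  List.ofFn fun j => l.get (π l.length j)

theorem permutedReading_revPerm {α : Type*} (l : List α) :
    permutedReading (fun _ => Fin.revPerm) l = l.reverse := by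
  refine List.ext_getElem (by simp [permutedReading]) fun j h _ => ?_
  simp only [permutedReading, Fin.revPerm_apply, List.get_eq_getElem, Fin.val_rev,
    List.getElem_ofFn, List.getElem_reverse]
  congr 1; omega

theorem List.lt_iff_exists_getElem {α : Type*} [LT α] {l₁ l₂ : List α} :
    l₁ < l₂ ↔
      (∃ j, ∃ (h₁ : j < l₁.length) (h₂ : j < l₂.length), l₁[j] < l₂[j] ∧
          ∀ i (hi₁ : i < l₁.length) (hi₂ : i < l₂.length), i < j → l₁[i] = l₂[i]) ∨
        (l₁.length < l₂.length ∧
          ∀ i (hi₁ : i < l₁.length) (hi₂ : i < l₂.length), l₁[i] = l₂[i]) := by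
  rw [List.lt_iff_exists, or_comm, ← List.prefix_iff_eq_take, List.prefix_iff_getElem]
  refine or_congr ?_ ?_
  · refine exists_congr fun j => exists_congr fun h₁ => exists_congr fun h₂ => ?_
    exact and_comm.trans
      (and_congr_right' ⟨fun h i _ _ hij => h i hij, fun h i hij => h i _ _ hij⟩)
  · exact ⟨fun ⟨⟨_, h⟩, hlt⟩ => ⟨hlt, fun i hi₁ _ => h i hi₁⟩,
      fun ⟨hlt, h⟩ => ⟨⟨hlt.le, fun i hi₁ => h i hi₁ _⟩, hlt⟩⟩

theorem dLt_iff_lt_permutedReading {α : Type*} [LT α] (π : ∀ n, Equiv.Perm (Fin n))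
    (σ τ : IncList ((· < ·) : α → α → Prop)) :
    DLt (· < ·) π σ τ ↔ permutedReading π σ.1 < permutedReading π τ.1 := by
  simp [List.lt_iff_exists_getElem, DLt, permutedReading]

/-- When `L` is the reverse order on `ℕ`, the map reversing a strictly increasing
sequence is an order isomorphism from `D_L(α)` onto `2^α`. -/
theorem stmt6 {α : Type*} [LinearOrder α] (π : ∀ n, Equiv.Perm (Fin n))
    (hπ : PermOf (fun i j => j ≤ i) π) :
    (∀ σ : IncList ((· < ·) : α → α → Prop), σ.1.reverse.Chain' (· > ·)) ∧
    (∀ τ : DecList α, ∃ σ : IncList ((· < ·) : α → α → Prop), σ.1.reverse = τ.1) ∧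
    (∀ σ τ : IncList ((· < ·) : α → α → Prop),
      DLt (· < ·) π σ τ ↔ List.Lex (· < ·) σ.1.reverse τ.1.reverse) := by
  have hrev : π = fun _ => Fin.revPerm := funext fun n => Equiv.ext (hπ.apply_eq_rev n)
  refine ⟨fun σ => List.isChain_reverse.2 σ.2,
    fun τ => ⟨⟨τ.1.reverse, List.isChain_reverse.2 τ.2⟩, List.reverse_reverse _⟩, fun σ τ => ?_⟩
  rw [dLt_iff_lt_permutedReading, hrev, permutedReading_revPerm, permutedReading_revPerm]
  rfl
end

section
/- Let L = (ℕ, ≤_L) be a linear order and α a well order (well-founded linear order). If D_L(α) contains an infinite strictly descending sequence, then L embeds into α (hence L is well-founded). Consequently, if L is ill-founded then D_L(α) is well-founded for every well order α. -/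
/-! The permuted reading of a list, padded with `⊥` past its end, turns `DLt` into the
lexicographic order on `ℕ → WithBot α`. Along a lexicographically descending sequence over a
well order every coordinate is eventually constant, and no limit coordinate is `⊥`, since
otherwise the sequence itself would be eventually constant. The limit reading `e` embeds `L`
into `α`: for large `n`, `e i` and `e j` are the entries of the increasing list `f n` at
positions `π i` and `π j`, which are ordered as `i` and `j` are in `L`. An infinite
`L`-descending sequence would therefore yield one in `α`. -/

theorem PermOf.antisymm {Lle : ℕ → ℕ → Prop} {π : ∀ n, Equiv.Perm (Fin n)} (hπ : PermOf Lle π)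
    {i j : ℕ} (hij : Lle i j) (hji : Lle j i) : i = j := by
  have hi : i < max i j + 1 := by omega
  have hj : j < max i j + 1 := by omega
  have h := le_antisymm ((hπ _ ⟨i, hi⟩ ⟨j, hj⟩).2 hij) ((hπ _ ⟨j, hj⟩ ⟨i, hi⟩).2 hji)
  simpa using (π _).injective (Fin.ext h)

namespace Pi.Lex

variable {β : Type*} [PartialOrder β] [WellFoundedLT β]

theorem exists_eventually_eq_of_descending (x : ℕ → ℕ → β)
    (hx : ∀ n, toLex (x (n + 1)) < toLex (x n)) :
    ∃ c : ℕ → β, ∀ j, ∀ᶠ n in Filter.atTop, x n j = c j := by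
  have stable : ∀ k, ∃ N, ∀ n ≥ N, ∀ j < k, x n j = x N j := by
    intro k
    induction k with
    | zero => exact ⟨0, fun _ _ _ hj => absurd hj (Nat.not_lt_zero _)⟩
    | succ k ih =>
      obtain ⟨N, hN⟩ := ih
      have hanti : Antitone fun i => x (N + i) k := by
        refine antitone_nat_of_succ_le fun i => ?_
        obtain ⟨j, hagree, hlt⟩ := hx (N + i)
        rcases lt_trichotomy j k with hjk | rfl | hkj
        · have := (hN (N + i + 1) (by omega) j hjk).trans (hN (N + i) (by omega) j hjk).symm
          exact absurd this hlt.ne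
        · exact hlt.le
        · exact (hagree k hkj).le
      obtain ⟨M, hM⟩ := WellFoundedLT.antitone_chain_condition hanti
      refine ⟨N + M, fun n hn j hj => ?_⟩
      rcases Nat.lt_succ_iff_lt_or_eq.mp hj with hj | rfl
      · exact (hN n (by omega) j hj).trans (hN _ (by omega) j hj).symm
      · obtain ⟨i, rfl⟩ := Nat.exists_eq_add_of_le (show N ≤ n by omega)
        exact (hM i (by omega)).symm
  choose N hN using stable
  exact ⟨fun j => x (N (j + 1)) j, fun j =>
    Filter.eventually_atTop.2 ⟨N (j + 1), fun n hn => hN _ n hn j (Nat.lt_succ_self j)⟩⟩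

end Pi.Lex

section Reading

variable {α : Type*} (π : ∀ n, Equiv.Perm (Fin n))

def reading (l : List α) (j : ℕ) : WithBot α :=
  if h : j < l.length then l.get (π l.length ⟨j, h⟩) else ⊥

variable {π}

theorem reading_of_lt {l : List α} {j : ℕ} (h : j < l.length) :
    reading π l j = l.get (π l.length ⟨j, h⟩) :=
  dif_pos h

theorem reading_eq_bot_iff {l : List α} {j : ℕ} : reading π l j = ⊥ ↔ l.length ≤ j := by
  unfold reading
  split_ifs with h <;> simp <;> omega

theorem reading_le_reading_iff [LinearOrder α] {Lle : ℕ → ℕ → Prop} (hπ : PermOf Lle π)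
    {l : List α} (hl : l.IsChain (· < ·)) {i j : ℕ} (hi : i < l.length) (hj : j < l.length) :
    reading π l i ≤ reading π l j ↔ Lle i j := by
  rw [reading_of_lt hi, reading_of_lt hj, WithBot.coe_le_coe,
    (List.sortedLT_iff_isChain.2 hl).strictMono_get.le_iff_le, Fin.le_def]
  exact hπ _ ⟨i, hi⟩ ⟨j, hj⟩

theorem DLt.toLex_reading_lt [LinearOrder α] {σ τ : IncList ((· < ·) : α → α → Prop)}
    (h : DLt (· < ·) π σ τ) : toLex (reading π σ.1) < toLex (reading π τ.1) := by
  rcases h with ⟨j, hσ, hτ, hlt, hagree⟩ | ⟨hlen, hagree⟩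
  · refine ⟨j, fun i hij => ?_, ?_⟩
    · simp only [Pi.toLex_apply, reading_of_lt (hij.trans hσ), reading_of_lt (hij.trans hτ)]
      exact congrArg _ (hagree i _ _ hij)
    · simpa only [Pi.toLex_apply, reading_of_lt hσ, reading_of_lt hτ] using WithBot.coe_lt_coe.2 hlt
  · refine ⟨σ.1.length, fun i hi => ?_, ?_⟩
    · simp only [Pi.toLex_apply, reading_of_lt hi, reading_of_lt (hi.trans hlen)]
      exact congrArg _ (hagree i _ _)
    · simp only [Pi.toLex_apply, reading_eq_bot_iff.2 le_rfl, reading_of_lt hlen]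
      exact WithBot.bot_lt_coe _

end Reading

theorem exists_embedding_of_dLt_descending {α : Type*} [LinearOrder α] [WellFoundedLT α]
    {Lle : ℕ → ℕ → Prop} {π : ∀ n, Equiv.Perm (Fin n)} (hπ : PermOf Lle π)
    (f : ℕ → IncList ((· < ·) : α → α → Prop)) (hf : ∀ n, DLt (· < ·) π (f (n + 1)) (f n)) :
    ∃ e : ℕ → α, ∀ i j, Lle i j ↔ e i ≤ e j := by
  have hx (n : ℕ) : toLex (reading π (f (n + 1)).1) < toLex (reading π (f n).1) :=
    (hf n).toLex_reading_lt
  obtain ⟨c, hc⟩ := Pi.Lex.exists_eventually_eq_of_descending (fun n => reading π (f n).1) hx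
  have hc_ne_bot : ∀ k, c k ≠ ⊥ := by
    intro k hk
    obtain ⟨N, hN⟩ := Filter.eventually_atTop.1
      ((Filter.eventually_all_finset (Finset.range (k + 1))).2 fun j _ => hc j)
    have hlen : ∀ n ≥ N, (f n).1.length ≤ k := fun n hn =>
      reading_eq_bot_iff.1 ((hN n hn k (by simp)).trans hk)
    have hstuck : reading π (f (N + 1)).1 = reading π (f N).1 := by
      funext j
      rcases lt_or_ge j k with hj | hj
      · rw [hN _ (by omega) j (by simp; omega), hN N le_rfl j (by simp; omega)]
      · rw [reading_eq_bot_iff.2 ((hlen _ (by omega)).trans hj),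
          reading_eq_bot_iff.2 ((hlen N le_rfl).trans hj)]
    exact (hx N).ne (by rw [hstuck])
  have hlt_length {n k : ℕ} (h : reading π (f n).1 k = c k) : k < (f n).1.length :=
    not_le.1 fun hle => hc_ne_bot k (h ▸ reading_eq_bot_iff.2 hle)
  refine ⟨fun i => (c i).unbot (hc_ne_bot i), fun i j => ?_⟩
  obtain ⟨n, hi, hj⟩ := ((hc i).and (hc j)).exists
  rw [← WithBot.coe_le_coe, WithBot.coe_unbot, WithBot.coe_unbot, ← hi, ← hj,
    reading_le_reading_iff hπ (f n).2 (hlt_length hi) (hlt_length hj)]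

theorem stmt7_general {α : Type*} [LinearOrder α] (Lle : ℕ → ℕ → Prop)
    (π : ∀ n, Equiv.Perm (Fin n)) (hπ : PermOf Lle π)
    (hα : WellFounded ((· < ·) : α → α → Prop)) :
    (∀ f : ℕ → IncList ((· < ·) : α → α → Prop),
        (∀ n, DLt (· < ·) π (f (n + 1)) (f n)) →
        ∃ e : ℕ → α, ∀ i j : ℕ, Lle i j ↔ e i ≤ e j) ∧
    ((∃ g : ℕ → ℕ, ∀ n, Lle (g (n + 1)) (g n) ∧ g (n + 1) ≠ g n) →
        ∀ f : ℕ → IncList ((· < ·) : α → α → Prop),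
          ¬ ∀ n, DLt (· < ·) π (f (n + 1)) (f n)) := by
  have : WellFoundedLT α := ⟨hα⟩
  refine ⟨fun f hf => exists_embedding_of_dLt_descending hπ f hf, ?_⟩
  rintro ⟨g, hg⟩ f hf
  obtain ⟨e, he⟩ := exists_embedding_of_dLt_descending hπ f hf
  refine not_strictAnti_of_wellFoundedLT (e ∘ g) (strictAnti_nat_of_succ_lt fun n => ?_)
  exact ((he _ _).1 (hg n).1).lt_of_ne fun h =>
    (hg n).2 (hπ.antisymm (hg n).1 ((he _ _).2 h.ge))

/-- If `α` is a well order and `D_L(α)` contains an infinite strictly descending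
sequence, then `L` embeds into `α`.  Consequently, if `L` is ill-founded then
`D_L(α)` is well-founded. -/
theorem stmt7 {α : Type*} [LinearOrder α] (Lle : ℕ → ℕ → Prop)
    (hL : IsLinearOrder ℕ Lle) (π : ∀ n, Equiv.Perm (Fin n)) (hπ : PermOf Lle π)
    (hα : WellFounded ((· < ·) : α → α → Prop)) :
    (∀ f : ℕ → IncList ((· < ·) : α → α → Prop),
        (∀ n, DLt (· < ·) π (f (n + 1)) (f n)) →
        ∃ e : ℕ → α, ∀ i j : ℕ, Lle i j ↔ e i ≤ e j) ∧
    ((∃ g : ℕ → ℕ, ∀ n, Lle (g (n + 1)) (g n) ∧ g (n + 1) ≠ g n) →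
        ∀ f : ℕ → IncList ((· < ·) : α → α → Prop),
          ¬ ∀ n, DLt (· < ·) π (f (n + 1)) (f n)) :=
  stmt7_general Lle π hπ hα
end

section
/- Let L = (ℕ, ≤_L) be a well-founded linear order. Then D_L(2·L) is ill-founded: the sequence of increasing maps σ_n : {0,...,n} → 2·L defined by σ_n(π_{n+1}(i)) = 2·i for i < n and σ_n(π_{n+1}(n)) = 2·i+1 for i = n forms an infinite strictly descending sequence in D_L(2·L). In particular, if L is well-founded then D_L does not preserve well-foundedness. -/
/-- The strict order `2·L`: elements `2x+k` (`x ∈ L`, `k ∈ {0,1}`), compared by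
`x` first (in `L`) and then by `k`. -/
def TwoLLt (Lle : ℕ → ℕ → Prop) (p q : ℕ × Bool) : Prop :=
  (Lle p.1 q.1 ∧ ¬ Lle q.1 p.1) ∨ (p.1 = q.1 ∧ p.2 < q.2)

/-!
`2·L` is the lexicographic product of `L` with the two-element order, hence well-founded.
Reading `σ_n` through `π_{n+1}` gives `(0,0), (1,0), …, (n-1,0), (n,1)`, while the reading of
`σ_{n+1}` starts `(0,0), …, (n,0)`: the two agree below position `n`, where
`2·n < 2·n+1`, so `σ_{n+1} < σ_n`. Each `σ_n` is increasing because `π_{n+1}` transports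
`≤_L` to the usual order of positions.
-/

theorem TwoLLt.wellFounded {Lle : ℕ → ℕ → Prop}
    (hwf : WellFounded (fun i j => Lle i j ∧ ¬ Lle j i)) : WellFounded (TwoLLt Lle) := by
  refine Subrelation.wf ?_ (hwf.prod_lex (IsWellFounded.wf : WellFounded ((· < ·) : Bool → _)))
  rintro ⟨a, b⟩ ⟨c, d⟩ (h | ⟨rfl, h⟩)
  · exact Prod.Lex.left _ _ h
  · exact Prod.Lex.right _ h

theorem PermOf.lt_symm_of_lt {Lle : ℕ → ℕ → Prop} {π : ∀ n, Equiv.Perm (Fin n)}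
    (hπ : PermOf Lle π) {n : ℕ} {p q : Fin n} (hpq : p < q) :
    Lle ((π n).symm p) ((π n).symm q) ∧ ¬ Lle ((π n).symm q) ((π n).symm p) := by
  rw [← hπ, ← hπ]
  simp only [Equiv.apply_symm_apply]
  omega

theorem perm_fin_cast (π : ∀ n, Equiv.Perm (Fin n)) {m m' : ℕ} (e : m = m') (x : Fin m) :
    π m' (Fin.cast e x) = Fin.cast e (π m x) := by
  subst e; rfl

/-- `σ_n` listed by position; the pair `(i, b)` stands for the element `2·i + b` of `2·L`. -/
def sigmaEntries (π : ∀ n, Equiv.Perm (Fin n)) (n : ℕ) (p : Fin (n + 1)) : ℕ × Bool :=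
  (((π (n + 1)).symm p : ℕ), decide (((π (n + 1)).symm p : ℕ) = n))

section Sigma

variable {Lle : ℕ → ℕ → Prop} {π : ∀ n, Equiv.Perm (Fin n)}

def sigmaList (hπ : PermOf Lle π) (n : ℕ) : IncList (TwoLLt Lle) :=
  ⟨List.ofFn (sigmaEntries π n),
    List.isChain_ofFn.2 fun _ _ => Or.inl (hπ.lt_symm_of_lt (Fin.lt_def.2 (Nat.lt_succ_self _)))⟩

theorem sigmaList_length (hπ : PermOf Lle π) (n : ℕ) : (sigmaList hπ n).1.length = n + 1 :=
  List.length_ofFn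

theorem sigmaList_get_perm (hπ : PermOf Lle π) (n i : ℕ) (h : i < n + 1) :
    (sigmaList hπ n).1.get (Fin.cast (sigmaList_length hπ n).symm (π (n + 1) ⟨i, h⟩)) =
      (i, decide (i = n)) := by
  change (List.ofFn (sigmaEntries π n)).get (Fin.cast List.length_ofFn.symm _) = _
  simp only [List.get_ofFn, Fin.cast_cast, Fin.cast_eq_self, sigmaEntries, Equiv.symm_apply_apply]

theorem sigmaList_reading (hπ : PermOf Lle π) (n i : ℕ) (h : i < (sigmaList hπ n).1.length) :
    (sigmaList hπ n).1.get (π _ ⟨i, h⟩) = (i, decide (i = n)) := by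
  have e := (sigmaList_length hπ n).symm
  rw [show (⟨i, h⟩ : Fin _) = Fin.cast e ⟨i, e ▸ h⟩ from rfl, perm_fin_cast π e]
  exact sigmaList_get_perm hπ n i _

theorem dLt_sigmaList_succ (hπ : PermOf Lle π) (n : ℕ) :
    DLt (TwoLLt Lle) π (sigmaList hπ (n + 1)) (sigmaList hπ n) := by
  refine Or.inl ⟨n, by simp [sigmaList_length], by simp [sigmaList_length], ?_, ?_⟩
  · rw [sigmaList_reading, sigmaList_reading]
    exact Or.inr ⟨rfl, by simp⟩
  · intro i his hit hi
    rw [sigmaList_reading, sigmaList_reading]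
    simp only [Prod.mk.injEq, true_and, decide_eq_decide]
    omega

end Sigma

theorem stmt8_general (Lle : ℕ → ℕ → Prop)
    (π : ∀ n, Equiv.Perm (Fin n)) (hπ : PermOf Lle π)
    (hwf : WellFounded (fun i j => Lle i j ∧ ¬ Lle j i)) :
    WellFounded (TwoLLt Lle) ∧
    ∃ f : ℕ → IncList (TwoLLt Lle), ∃ hl : ∀ n, (f n).1.length = n + 1,
      (∀ n : ℕ, ∀ i : ℕ, ∀ h : i < n + 1,
        (f n).1.get (Fin.cast (hl n).symm (π (n + 1) ⟨i, h⟩)) = (i, decide (i = n))) ∧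
      (∀ n, DLt (TwoLLt Lle) π (f (n + 1)) (f n)) :=
  ⟨TwoLLt.wellFounded hwf, sigmaList hπ, sigmaList_length hπ, sigmaList_get_perm hπ,
    dLt_sigmaList_succ hπ⟩

/-- If `L` is well-founded, then `D_L(2·L)` is ill-founded: `2·L` is a well order,
yet the sequence `σ_n` with `σ_n(π_{n+1}(i)) = 2·i` for `i < n` and
`σ_n(π_{n+1}(n)) = 2·n+1` is strictly descending in `D_L(2·L)`. -/
theorem stmt8 (Lle : ℕ → ℕ → Prop) (hL : IsLinearOrder ℕ Lle)
    (π : ∀ n, Equiv.Perm (Fin n)) (hπ : PermOf Lle π)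
    (hwf : WellFounded (fun i j => Lle i j ∧ ¬ Lle j i)) :
    WellFounded (TwoLLt Lle) ∧
    ∃ f : ℕ → IncList (TwoLLt Lle), ∃ hl : ∀ n, (f n).1.length = n + 1,
      (∀ n : ℕ, ∀ i : ℕ, ∀ h : i < n + 1,
        (f n).1.get (Fin.cast (hl n).symm (π (n + 1) ⟨i, h⟩)) = (i, decide (i = n))) ∧
      (∀ n, DLt (TwoLLt Lle) π (f (n + 1)) (f n)) :=
  stmt8_general Lle π hπ hwf
end

section
/- For arbitrary linear orders L = (ℕ, ≤_L) and γ, there is an order embedding of (1+α)^γ into D_L(α · 2^γ) for every linear order α. -/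
/-- `(1+α)^γ`: finite sequences of pairs `(x,y)` with strictly decreasing first
components in `γ`, compared lexicographically (earlier pairs have priority). -/
def EList (γ α : Type*) [LinearOrder γ] : Type _ :=
  {l : List (γ × α) // (l.map Prod.fst).Chain' (· > ·)}

/-- The lexicographic order on `(1+α)^γ`. -/
def ELt {γ α : Type*} [LinearOrder γ] [LinearOrder α] (σ τ : EList γ α) : Prop :=
  List.Lex (fun p q => p.1 < q.1 ∨ (p.1 = q.1 ∧ p.2 < q.2)) σ.1 τ.1

/-- The strict order on `α · 2^γ` (pairs with the `2^γ` component taking priority). -/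
def ProdLt {γ α : Type*} [LinearOrder γ] [LinearOrder α]
    (p q : DecList γ × α) : Prop :=
  TwoLt p.1 q.1 ∨ (p.1 = q.1 ∧ p.2 < q.2)

/-!
Send `σ = ⟨(x₀,y₀), …, (x_{n-1},y_{n-1})⟩` to the sequence whose `j`-th term is
`(A_j, y_j)` with `A_j = {x_k : k ≤ j, k ≤_L j} ∈ 2^γ`, stored at position `π_n(j)`.
If `i <_L j`, the first index at which the index sets of `A_i` and `A_j` differ belongs to
`A_j`, and the `x_k` decrease, so `A_i < A_j`: the stored sequence is increasing, i.e. lies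
in `D_L(α · 2^γ)`. Reading it through `π` gives back `(A_j, y_j)_j`. If `σ` and `τ` agree
before `j`, then `A_j^σ` and `A_j^τ` agree except for their last elements `x_j^σ` and
`x_j^τ`, so the `j`-th terms compare as `(x_j, y_j)` do, and the lexicographic orders match.
-/

namespace List

variable {α β : Type*}

def prefixMap (g : List α → α → β) : List α → List β
  | [] => []
  | a :: l => g [] a :: prefixMap (fun P => g (a :: P)) l

@[simp]
theorem length_prefixMap (g : List α → α → β) (l : List α) :
    (prefixMap g l).length = l.length := by
  induction l generalizing g with
  | nil => rfl
  | cons a l ih => simp [prefixMap, ih]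

theorem getElem_prefixMap (g : List α → α → β) (l : List α) {j : ℕ}
    (h : j < (prefixMap g l).length) :
    (prefixMap g l)[j] = g (l.take j) (l[j]'(by simpa using h)) := by
  induction l generalizing g j with
  | nil => simp at h
  | cons a l ih =>
    cases j with
    | zero => rfl
    | succ j => exact ih _ _

theorem lex_prefixMap_iff {r : α → α → Prop} {s : β → β → Prop} {g : List α → α → β}
    (hg : ∀ P a b, s (g P a) (g P b) ↔ r a b) (hinj : ∀ P, Function.Injective (g P))
    {l₁ l₂ : List α} : Lex s (prefixMap g l₁) (prefixMap g l₂) ↔ Lex r l₁ l₂ := by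
  induction l₁ generalizing g l₂ with
  | nil => cases l₂ <;> simp [prefixMap]
  | cons a l₁ ih =>
    cases l₂ with
    | nil => simp [prefixMap]
    | cons b l₂ =>
      simp only [prefixMap, cons_lex_cons_iff, hg, (hinj []).eq_iff]
      refine or_congr_right (and_congr_right fun hab => ?_)
      subst hab
      exact ih (fun P => hg (a :: P)) (fun P => hinj (a :: P))

theorem lex_map_iff {r : α → α → Prop} {s : β → β → Prop} {f : α → β}
    (hf : ∀ a b, s (f a) (f b) ↔ r a b) (hinj : Function.Injective f) {l₁ l₂ : List α} :
    Lex s (l₁.map f) (l₂.map f) ↔ Lex r l₁ l₂ := by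
  induction l₁ generalizing l₂ with
  | nil => cases l₂ <;> simp
  | cons a l₁ ih =>
    cases l₂ with
    | nil => simp
    | cons b l₂ => simp only [map_cons, cons_lex_cons_iff, hf, hinj.eq_iff, ih]

theorem lex_append_singleton_iff {r : α → α → Prop} [Std.Irrefl r] {l : List α} {a b : α} :
    Lex r (l ++ [a]) (l ++ [b]) ↔ r a b := by
  induction l with
  | nil => exact lex_singleton_iff a b
  | cons c l ih => simpa only [cons_append, lex_cons_iff] using ih

open Classical in
noncomputable def selectIdx (S : ℕ → Prop) : List α → List α
  | [] => []
  | a :: l =>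
    if S 0 then a :: selectIdx (fun k => S (k + 1)) l else selectIdx (fun k => S (k + 1)) l

theorem selectIdx_sublist (S : ℕ → Prop) (l : List α) : (selectIdx S l).Sublist l := by
  induction l generalizing S with
  | nil => exact Sublist.slnil
  | cons a l ih =>
    by_cases h : S 0
    · simpa [selectIdx, h] using ih _
    · simpa [selectIdx, h] using (ih _).cons a

theorem selectIdx_append_singleton {S : ℕ → Prop} {l : List α} (a : α) (h : S l.length) :
    selectIdx S (l ++ [a]) = selectIdx S l ++ [a] := by
  induction l generalizing S with
  | nil => simpa [selectIdx] using h
  | cons b l ih =>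
    by_cases h0 : S 0 <;> simp [selectIdx, h0, ih (S := fun k => S (k + 1)) h]

@[simp]
theorem selectIdx_false (l : List α) : selectIdx (fun _ => False) l = [] := by
  induction l with
  | nil => rfl
  | cons a l ih => simpa [selectIdx] using ih

theorem selectIdx_take (S : ℕ → Prop) (l : List α) (n : ℕ) :
    selectIdx S (l.take n) = selectIdx (fun k => k < n ∧ S k) l := by
  induction l generalizing S n with
  | nil => simp [selectIdx]
  | cons a l ih =>
    cases n with
    | zero => simp [selectIdx]
    | succ n => by_cases h0 : S 0 <;> simp [selectIdx, h0, ih]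

theorem lex_selectIdx [LT α] {S T : ℕ → Prop} {l : List α} (hl : l.Pairwise (· > ·))
    {d : ℕ} (hd : d < l.length) (hagree : ∀ k < d, S k ↔ T k) (hS : ¬ S d) (hT : T d) :
    Lex (· < ·) (selectIdx S l) (selectIdx T l) := by
  induction l generalizing S T d with
  | nil => simp at hd
  | cons a l ih =>
    rw [pairwise_cons] at hl
    cases d with
    | zero =>
      simp only [selectIdx, if_pos hT, if_neg hS]
      cases hsel : selectIdx (fun k => S (k + 1)) l with
      | nil => exact Lex.nil
      | cons c u =>
        have hc : c ∈ l := (selectIdx_sublist _ l).subset (hsel ▸ mem_cons_self)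
        exact Lex.rel (hl.1 c hc)
    | succ d =>
      have ih' := ih (S := fun k => S (k + 1)) (T := fun k => T (k + 1)) hl.2
        (by simpa using hd) (fun k hk => hagree (k + 1) (by omega)) hS hT
      by_cases h0 : S 0
      · simp only [selectIdx, if_pos h0, if_pos ((hagree 0 (by omega)).1 h0)]
        exact Lex.cons ih'
      · simp only [selectIdx, if_neg h0, if_neg (mt (hagree 0 (by omega)).2 h0)]
        exact ih'

end List

section PermutedReading

variable {β : Type*} (π : ∀ n, Equiv.Perm (Fin n))

theorem perm_val_congr {m n i : ℕ} (hmn : m = n) (hm : i < m) (hn : i < n) :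
    (π m ⟨i, hm⟩ : ℕ) = π n ⟨i, hn⟩ := by
  subst hmn
  rfl

def permRead (l : List β) : List β := List.ofFn fun j => l.get (π l.length j)

def permWrite (l : List β) : List β := List.ofFn fun p => l.get ((π l.length).symm p)

@[simp]
theorem length_permRead (l : List β) : (permRead π l).length = l.length := List.length_ofFn

@[simp]
theorem length_permWrite (l : List β) : (permWrite π l).length = l.length := List.length_ofFn

theorem getElem_permRead (l : List β) {i : ℕ} (h : i < (permRead π l).length) :
    (permRead π l)[i] = l[(π l.length ⟨i, by simpa using h⟩ : ℕ)] :=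
  List.getElem_ofFn _

theorem getElem_permWrite (l : List β) {i : ℕ} (h : i < (permWrite π l).length) :
    (permWrite π l)[i] = l[((π l.length).symm ⟨i, by simpa using h⟩ : ℕ)] :=
  List.getElem_ofFn _

theorem permRead_permWrite (l : List β) : permRead π (permWrite π l) = l := by
  refine List.ext_getElem (by simp) fun i h hi => ?_
  rw [getElem_permRead, getElem_permWrite]
  simp only [perm_val_congr π (length_permWrite π l) _ hi, Fin.eta, Equiv.symm_apply_apply]

theorem isChain_permWrite {r : β → β → Prop} {l : List β}
    (h : ∀ i j : Fin l.length, π _ i < π _ j → r l[i] l[j]) : (permWrite π l).IsChain r := by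
  rw [permWrite, List.isChain_ofFn]
  intro i hi
  apply h
  simp [Fin.lt_def]

theorem dLt_iff_lex_permRead {r : β → β → Prop} (s t : IncList r) :
    DLt r π s t ↔ List.Lex r (permRead π s.1) (permRead π t.1) := by
  let _ : LT β := ⟨r⟩
  change _ ↔ permRead π s.1 < permRead π t.1
  rw [List.lt_iff_exists, or_comm, DLt]
  apply or_congr
  · simp only [getElem_permRead, length_permRead, List.get_eq_getElem]
    exact exists_congr fun j => exists_congr fun hs => exists_congr fun ht =>
      ⟨fun ⟨hlt, hag⟩ => ⟨fun i hi => hag i _ _ hi, hlt⟩,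
        fun ⟨hag, hlt⟩ => ⟨hlt, fun i _ _ hi => hag i hi⟩⟩
  · simp only [List.ext_getElem_iff, getElem_permRead, length_permRead, List.get_eq_getElem,
      List.length_take, List.getElem_take]
    exact ⟨fun ⟨hlt, hag⟩ => ⟨⟨(min_eq_left hlt.le).symm, fun i h _ => hag i h _⟩, hlt⟩,
      fun ⟨⟨_, hag⟩, hlt⟩ => ⟨hlt, fun i hs ht => hag i hs (by omega)⟩⟩

theorem dLt_permWrite_iff_lex {r : β → β → Prop} {l₁ l₂ : List β}
    (h₁ : (permWrite π l₁).IsChain r) (h₂ : (permWrite π l₂).IsChain r) :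
    DLt r π ⟨permWrite π l₁, h₁⟩ ⟨permWrite π l₂, h₂⟩ ↔ List.Lex r l₁ l₂ :=
  (dLt_iff_lex_permRead π _ _).trans (by rw [permRead_permWrite, permRead_permWrite])

end PermutedReading

section Entries

open List

variable {γ α : Type*} {Lle : ℕ → ℕ → Prop}

/-- For `P = σ.take j` and `p = σ[j]` this is the term `(A_j, y_j)`. -/
noncomputable def entry (Lle : ℕ → ℕ → Prop) (P : List (γ × α)) (p : γ × α) : List γ × α :=
  (((P ++ [p]).map Prod.fst).selectIdx (Lle · P.length), p.2)

theorem entry_eq [Std.Refl Lle] (P : List (γ × α)) (p : γ × α) :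
    entry Lle P p = ((P.map Prod.fst).selectIdx (Lle · P.length) ++ [p.1], p.2) := by
  rw [entry, map_append, map_singleton,
    selectIdx_append_singleton _ (by simpa using refl_of Lle P.length)]

theorem entry_injective [Std.Refl Lle] (P : List (γ × α)) : Function.Injective (entry Lle P) := by
  intro p q h
  simp only [entry_eq, Prod.mk.injEq, append_cancel_left_eq, singleton_inj] at h
  exact Prod.ext h.1 h.2

theorem entry_lt_entry_iff [Preorder γ] [LT α] [Std.Refl Lle] (P : List (γ × α)) (p q : γ × α) :
    Prod.Lex (Lex (· < ·)) (· < ·) (entry Lle P p) (entry Lle P q) ↔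
      Prod.Lex (· < ·) (· < ·) p q := by
  simp only [entry_eq, Prod.lex_def, lex_append_singleton_iff, append_cancel_left_eq, singleton_inj]

theorem lex_prefixMap_entry_iff [Preorder γ] [LT α] [Std.Refl Lle] {l₁ l₂ : List (γ × α)} :
    Lex (Prod.Lex (Lex (· < ·)) (· < ·)) (prefixMap (entry Lle) l₁) (prefixMap (entry Lle) l₂) ↔
      Lex (Prod.Lex (· < ·) (· < ·)) l₁ l₂ :=
  lex_prefixMap_iff (entry_lt_entry_iff (Lle := Lle)) entry_injective

theorem fst_getElem_prefixMap_entry (l : List (γ × α)) {j : ℕ}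
    (h : j < (prefixMap (entry Lle) l).length) :
    ((prefixMap (entry Lle) l)[j]).1 =
      (l.map Prod.fst).selectIdx (fun k => k < j + 1 ∧ Lle k j) := by
  have hj : j < l.length := by simpa using h
  rw [getElem_prefixMap, entry, take_append_getElem, map_take, selectIdx_take,
    length_take_of_le hj.le]

theorem isChain_fst_of_mem_prefixMap_entry [Preorder γ] {l : List (γ × α)}
    (hl : (l.map Prod.fst).IsChain (· > ·)) {p : List γ × α} (hp : p ∈ prefixMap (entry Lle) l) :
    p.1.IsChain (· > ·) := by
  obtain ⟨j, hj, rfl⟩ := getElem_of_mem hp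
  rw [fst_getElem_prefixMap_entry, isChain_iff_pairwise]
  exact (isChain_iff_pairwise.1 hl).sublist (selectIdx_sublist _ _)

theorem exists_first_separating_index [IsPartialOrder ℕ Lle] {i j : ℕ} (hij : i ≠ j)
    (hLij : Lle i j) :
    ∃ d ≤ j, (∀ k < d, (k < i + 1 ∧ Lle k i ↔ k < j + 1 ∧ Lle k j)) ∧
      ¬ (d < i + 1 ∧ Lle d i) ∧ (d < j + 1 ∧ Lle d j) := by
  classical
  have hj : ¬ (j < i + 1 ∧ Lle j i ↔ j < j + 1 ∧ Lle j j) := fun h =>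
    hij (antisymm hLij (h.2 ⟨by omega, refl_of Lle j⟩).2)
  have hex : ∃ d, ¬ (d < i + 1 ∧ Lle d i ↔ d < j + 1 ∧ Lle d j) := ⟨j, hj⟩
  have hdj : Nat.find hex ≤ j := Nat.find_min' hex hj
  have hS : ¬ (Nat.find hex < i + 1 ∧ Lle (Nat.find hex) i) := fun hdi =>
    Nat.find_spec hex ⟨fun _ => ⟨by omega, _root_.trans hdi.2 hLij⟩, fun _ => hdi⟩
  exact ⟨Nat.find hex, hdj, fun k hk => not_not.1 (Nat.find_min hex hk), hS,
    by_contra fun hT => Nat.find_spec hex ⟨fun h => absurd h hS, fun h => absurd h hT⟩⟩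

theorem lex_fst_getElem_prefixMap_entry [LT γ] [IsPartialOrder ℕ Lle]
    {l : List (γ × α)} (hl : (l.map Prod.fst).Pairwise (· > ·)) {i j : ℕ} (hij : i ≠ j)
    (hLij : Lle i j) (hi : i < (prefixMap (entry Lle) l).length) (hj : j < (prefixMap (entry Lle) l).length) :
    Lex (· < ·) ((prefixMap (entry Lle) l)[i]).1 ((prefixMap (entry Lle) l)[j]).1 := by
  obtain ⟨d, hdj, hagree, hS, hT⟩ := exists_first_separating_index hij hLij
  rw [fst_getElem_prefixMap_entry, fst_getElem_prefixMap_entry]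
  exact lex_selectIdx hl (by rw [length_map]; exact hdj.trans_lt (by simpa using hj)) hagree hS hT

end Entries

section Embedding

open List

variable {γ α : Type*} [LinearOrder γ] {Lle : ℕ → ℕ → Prop}

noncomputable def entries (Lle : ℕ → ℕ → Prop) (σ : EList γ α) : List (DecList γ × α) :=
  (prefixMap (entry Lle) σ.1).pmap (fun p hp => (⟨p.1, hp⟩, p.2))
    fun _ hp => isChain_fst_of_mem_prefixMap_entry σ.2 hp

theorem map_entries (σ : EList γ α) :
    (entries Lle σ).map (fun q => (q.1.1, q.2)) = prefixMap (entry Lle) σ.1 := by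
  simp [entries, map_pmap]

theorem fst_getElem_entries (σ : EList γ α) {i : ℕ} (h : i < (entries Lle σ).length) :
    ((entries Lle σ)[i]).1.1 =
      ((prefixMap (entry Lle) σ.1)[i]'(by simpa [entries] using h)).1 := by
  simp [entries]

theorem lex_entries_iff [LinearOrder α] [Std.Refl Lle] (σ τ : EList γ α) :
    Lex ProdLt (entries Lle σ) (entries Lle τ) ↔ ELt σ τ := by
  have hrel : Prod.Lex (· < ·) (· < ·) =
      fun p q : γ × α => p.1 < q.1 ∨ (p.1 = q.1 ∧ p.2 < q.2) := by
    ext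
    exact Prod.lex_def
  rw [← lex_map_iff (r := ProdLt) (s := Prod.Lex (Lex (· < ·)) (· < ·))
    (f := fun q : DecList γ × α => (q.1.1, q.2))
    (fun _ _ => Prod.lex_def.trans (or_congr_right (and_congr_left' Subtype.ext_iff.symm)))
    (fun _ _ h => by simp only [Prod.mk.injEq] at h; exact Prod.ext (Subtype.ext h.1) h.2),
    map_entries, map_entries, lex_prefixMap_entry_iff, hrel, ELt]

theorem isChain_permWrite_entries [LinearOrder α] [IsPartialOrder ℕ Lle]
    {π : ∀ n, Equiv.Perm (Fin n)} (hπ : PermOf Lle π) (σ : EList γ α) :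
    (permWrite π (entries Lle σ)).IsChain ProdLt := by
  refine isChain_permWrite π fun i j hij => Or.inl ?_
  have hLij : Lle i j := (hπ _ i j).1 hij.le
  have hne : (i : ℕ) ≠ j := fun h => hij.ne (congrArg _ (Fin.ext h))
  change Lex _ ((entries Lle σ)[(i : ℕ)]).1.1 ((entries Lle σ)[(j : ℕ)]).1.1
  rw [fst_getElem_entries, fst_getElem_entries]
  exact lex_fst_getElem_prefixMap_entry (isChain_iff_pairwise.1 σ.2) hne hLij _ _

end Embedding

/-- For arbitrary linear orders `L` and `γ`, the order `(1+α)^γ` embeds into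
`D_L(α · 2^γ)` for every linear order `α`. -/
theorem stmt10 {γ α : Type*} [LinearOrder γ] [LinearOrder α]
    (Lle : ℕ → ℕ → Prop) (hL : IsLinearOrder ℕ Lle)
    (π : ∀ n, Equiv.Perm (Fin n)) (hπ : PermOf Lle π) :
    ∃ e : EList γ α → IncList (ProdLt (γ := γ) (α := α)),
      ∀ σ τ : EList γ α, ELt σ τ ↔ DLt (ProdLt (γ := γ) (α := α)) π (e σ) (e τ) := by
  refine ⟨fun σ => ⟨permWrite π (entries Lle σ), isChain_permWrite_entries hπ σ⟩, fun σ τ => ?_⟩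
  exact (lex_entries_iff σ τ).symm.trans (dLt_permWrite_iff_lex π _ _).symm
end

section
/- Suppose L = (ℕ, ≤_L) embeds into ℤ^r (the lexicographic power of the integers with r coordinates, finitely many coordinates, compared from the highest coordinate). Then for every linear order α there is an order embedding of 2^α into D_L(α · (ω·(α+1))^r). -/
/-- The lexicographic order on `ℤ^r` (coordinate `0` has the highest priority). -/
def ZLt (r : ℕ) (f g : Fin r → ℤ) : Prop :=
  ∃ k : Fin r, f k < g k ∧ ∀ l : Fin r, l < k → f l = g l

/-- The order `ω·(α+1)`: pairs `(x, n)` with `x ∈ α+1 = WithTop α`, `x` taking priority. -/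
def WLt {α : Type*} [LinearOrder α] (p q : WithTop α × ℕ) : Prop :=
  p.1 < q.1 ∨ (p.1 = q.1 ∧ p.2 < q.2)

/-- The `r`-fold lexicographic power `(ω·(α+1))^r`. -/
def RLt {α : Type*} [LinearOrder α] (r : ℕ) (f g : Fin r → WithTop α × ℕ) : Prop :=
  ∃ k : Fin r, WLt (f k) (g k) ∧ ∀ l : Fin r, l < k → f l = g l

/-- The order `α · (ω·(α+1))^r` (second component, i.e. `(ω·(α+1))^r`, takes priority). -/
def PLt11 {α : Type*} [LinearOrder α] (r : ℕ)
    (p q : (Fin r → WithTop α × ℕ) × α) : Prop :=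
  RLt r p.1 q.1 ∨ (p.1 = q.1 ∧ p.2 < q.2)

/-!
Write `σ ∈ 2^α` as `a 0 > a 1 > ⋯ > a (n-1)` and tag position `j` with `y j = (g j, a j)`, where
`g j ∈ (ω·(α+1))^r` depends only on `a 0, …, a (j-1)`. Because the tag of a letter is determined by
the letters before it, `σ ↦ y` turns the lexicographic order of `2^α` into that of words over
`α · (ω·(α+1))^r`. The embedding lists the `y j` so that their `π`-permuted reading is
`y 0, y 1, …`; that list is increasing as soon as `i <_L j` forces `g i < g j`, and through
`L ↪ ℤ^r` this reduces, coordinate by coordinate, to placing an integer sequence `z` into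
`ω·(α+1)` online and monotonically. Place `z j` at `(a (b-1), z j - z b)`, where `b` is the least
index with `z b ≤ z j` and `a (-1) = ⊤`: if `z i < z j` then `b j ≤ b i`, and equality raises the
second coordinate while a strict inequality raises the label, `σ` being decreasing.
-/

namespace PermutedLex

section Lists

variable {α β γ : Type*}

theorem lex_iff_getElem (R : α → α → Prop) {l₁ l₂ : List α} :
    List.Lex R l₁ l₂ ↔
      (∃ j, ∃ h₁ : j < l₁.length, ∃ h₂ : j < l₂.length, R l₁[j] l₂[j] ∧
        ∀ i (h₁ : i < l₁.length) (h₂ : i < l₂.length), i < j → l₁[i] = l₂[i]) ∨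
      (l₁.length < l₂.length ∧ ∀ i (h₁ : i < l₁.length) (h₂ : i < l₂.length), l₁[i] = l₂[i]) := by
  refine (@List.lt_iff_exists α ⟨R⟩ l₁ l₂).trans ?_
  rw [or_comm, ← List.prefix_iff_eq_take, List.prefix_iff_getElem]
  refine or_congr ?_ ?_
  · refine exists_congr fun j => exists_congr fun h₁ => exists_congr fun h₂ => ?_
    exact ⟨fun ⟨he, hr⟩ => ⟨hr, fun i _ _ hi => he i hi⟩,
      fun ⟨hr, he⟩ => ⟨fun i hi => he i _ _ hi, hr⟩⟩
  · exact ⟨fun ⟨⟨_, he⟩, hl⟩ => ⟨hl, fun i h₁ _ => he i h₁⟩,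
      fun ⟨hl, he⟩ => ⟨⟨hl.le, fun i h₁ => he i h₁ _⟩, hl⟩⟩

def permRead (π : ∀ n, Equiv.Perm (Fin n)) (x : List β) : List β :=
  List.ofFn fun j : Fin x.length => x.get (π x.length j)

theorem dlt_iff_lex_permRead (lt : β → β → Prop) (π : ∀ n, Equiv.Perm (Fin n))
    (σ τ : IncList lt) :
    DLt lt π σ τ ↔ List.Lex lt (permRead π σ.1) (permRead π τ.1) := by
  obtain ⟨x, -⟩ := σ
  obtain ⟨y, -⟩ := τ
  simp [lex_iff_getElem, permRead, DLt]

theorem permRead_eq_ofFn (π : ∀ n, Equiv.Perm (Fin n)) {n : ℕ} (f : Fin n → β) {x : List β}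
    (hx : x.length = n) (hf : ∀ i, x.get i = f (Fin.cast hx i)) :
    permRead π x = List.ofFn (f ∘ π n) := by
  subst hx
  exact congrArg List.ofFn (funext fun _ => hf _)

def unpermRead (π : ∀ n, Equiv.Perm (Fin n)) (y : List β) : List β :=
  List.ofFn fun i : Fin y.length => y.get ((π y.length).symm i)

theorem permRead_unpermRead (π : ∀ n, Equiv.Perm (Fin n)) (y : List β) :
    permRead π (unpermRead π y) = y := by
  rw [unpermRead, permRead_eq_ofFn π _ List.length_ofFn fun i => List.get_ofFn _ i]
  simp [Function.comp_def]

theorem isChain_unpermRead {R : β → β → Prop} (π : ∀ n, Equiv.Perm (Fin n)) {y : List β}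
    (hy : ∀ p q : Fin y.length, π _ p < π _ q → R y[p] y[q]) :
    (unpermRead π y).IsChain R := by
  refine List.Pairwise.isChain (List.pairwise_ofFn.mpr fun i j hij => hy _ _ ?_)
  simpa using hij

def tagWithPrefix (F : List α → γ) (l : List α) : List (γ × α) :=
  List.ofFn fun j : Fin l.length => (F (l.take j), l[j])

theorem tagWithPrefix_cons (F : List α → γ) (a : α) (l : List α) :
    tagWithPrefix F (a :: l) = (F [], a) :: tagWithPrefix (fun p => F (a :: p)) l := by
  simp [tagWithPrefix, List.ofFn_succ]

theorem lex_tagWithPrefix_iff {rγ : γ → γ → Prop} (hrγ : ∀ c, ¬ rγ c c) (rα : α → α → Prop)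
    (F : List α → γ) (s t : List α) :
    List.Lex (Prod.Lex rγ rα) (tagWithPrefix F s) (tagWithPrefix F t) ↔ List.Lex rα s t := by
  induction s generalizing F t with
  | nil => cases t <;> simp [tagWithPrefix]
  | cons a s ih =>
    cases t with
    | nil => simp [tagWithPrefix]
    | cons b t =>
      simp only [tagWithPrefix_cons, List.cons_lex_cons_iff, Prod.lex_def, hrγ, false_or,
        Prod.mk.injEq, true_and]
      constructor
      · rintro (hab | ⟨rfl, hst⟩)
        · exact .inl hab
        · exact .inr ⟨rfl, (ih _ t).mp hst⟩
      · rintro (hab | ⟨rfl, hst⟩)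
        · exact .inl hab
        · exact .inr ⟨rfl, (ih _ t).mpr hst⟩

end Lists

section Placement

variable {α : Type*}

def firstLE (z : ℕ → ℤ) (j : ℕ) : ℕ :=
  Nat.find (⟨j, le_rfl⟩ : ∃ i, z i ≤ z j)

theorem firstLE_le (z : ℕ → ℤ) (j : ℕ) : firstLE z j ≤ j :=
  Nat.find_min' _ le_rfl

theorem apply_firstLE_le (z : ℕ → ℤ) (j : ℕ) : z (firstLE z j) ≤ z j :=
  Nat.find_spec (⟨j, le_rfl⟩ : ∃ i, z i ≤ z j)

theorem firstLE_le_firstLE {z : ℕ → ℤ} {i j : ℕ} (h : z i ≤ z j) : firstLE z j ≤ firstLE z i :=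
  Nat.find_min' _ ((apply_firstLE_le z i).trans h)

theorem firstLE_congr {z : ℕ → ℤ} {i j : ℕ} (h : z i = z j) : firstLE z i = firstLE z j :=
  (firstLE_le_firstLE h.ge).antisymm (firstLE_le_firstLE h.le)

def label (l : List α) : ℕ → WithTop α
  | 0 => ⊤
  | i + 1 =>
    match l[i]? with
    | some a => a
    | none => ⊤

theorem label_take {l : List α} {n b : ℕ} (hb : b ≤ n) : label (l.take n) b = label l b := by
  cases b with
  | zero => rfl
  | succ b => simp [label, Nat.lt_of_succ_le hb]

theorem label_lt_label [LinearOrder α] {l : List α} (hl : l.IsChain (· > ·)) {b b' : ℕ}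
    (hbb' : b < b') (hb' : b' ≤ l.length) : label l b' < label l b := by
  obtain ⟨k, rfl⟩ : ∃ k, b' = k + 1 := ⟨b' - 1, by omega⟩
  have hk : k < l.length := by omega
  cases b with
  | zero => simp [label, List.getElem?_eq_getElem hk]
  | succ m =>
    have hm : m < l.length := by omega
    simpa [label, List.getElem?_eq_getElem hk, List.getElem?_eq_getElem hm] using
      (List.isChain_iff_pairwise.mp hl).rel_get_of_lt (a := ⟨m, hm⟩) (b := ⟨k, hk⟩)
        (by simp; omega)

def place (z : ℕ → ℤ) (l : List α) (j : ℕ) : WithTop α × ℕ :=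
  (label l (firstLE z j), (z j - z (firstLE z j)).toNat)

theorem place_take {z : ℕ → ℤ} {l : List α} {n j : ℕ} (hj : j ≤ n) :
    place z (l.take n) j = place z l j := by
  rw [place, place, label_take ((firstLE_le z j).trans hj)]

theorem place_congr {z : ℕ → ℤ} (l : List α) {i j : ℕ} (h : z i = z j) :
    place z l i = place z l j := by
  rw [place, place, firstLE_congr h, h]

def placeAll {r : ℕ} (h : ℕ → Fin r → ℤ) (l : List α) (j : ℕ) : Fin r → WithTop α × ℕ :=
  fun k => place (h · k) l j

theorem placeAll_take {r : ℕ} (h : ℕ → Fin r → ℤ) (l : List α) {n j : ℕ} (hj : j ≤ n) :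
    placeAll h (l.take n) j = placeAll h l j :=
  funext fun _ => place_take hj

theorem wlt_place [LinearOrder α] {z : ℕ → ℤ} {l : List α} (hl : l.IsChain (· > ·)) {i j : ℕ}
    (hz : z i < z j) (hi : i < l.length) : WLt (place z l i) (place z l j) := by
  rcases (firstLE_le_firstLE hz.le).eq_or_lt with heq | hlt
  · refine .inr ⟨by simp only [place, heq], ?_⟩
    have := apply_firstLE_le z i
    simp only [place, heq] at this ⊢
    omega
  · exact .inl (label_lt_label hl hlt (by have := firstLE_le z i; omega))

end Placement

section Embedding

variable {α : Type*} [LinearOrder α] {r : ℕ}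

theorem rlt_irrefl (f : Fin r → WithTop α × ℕ) : ¬ RLt r f f := by
  rintro ⟨k, hk | ⟨-, hk⟩, -⟩ <;> exact lt_irrefl _ hk

theorem plt11_eq_prodLex : PLt11 (α := α) r = Prod.Lex (RLt r) (· < ·) := by
  funext p q
  exact propext Prod.lex_def.symm

theorem rlt_placeAll {h : ℕ → Fin r → ℤ} {l : List α} (hl : l.IsChain (· > ·)) {i j : ℕ}
    (hz : ZLt r (h i) (h j)) (hi : i < l.length) : RLt r (placeAll h l i) (placeAll h l j) :=
  let ⟨k, hk, hlt⟩ := hz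
  ⟨k, wlt_place hl hk hi, fun k' hk' => place_congr l (hlt k' hk')⟩

def tagPlaces (h : ℕ → Fin r → ℤ) (l : List α) : List ((Fin r → WithTop α × ℕ) × α) :=
  tagWithPrefix (fun p => placeAll h p p.length) l

theorem plt11_getElem_tagPlaces {h : ℕ → Fin r → ℤ} {l : List α} (hl : l.IsChain (· > ·))
    {i j : ℕ} (hi : i < (tagPlaces h l).length) (hj : j < (tagPlaces h l).length)
    (hz : ZLt r (h i) (h j)) : PLt11 r (tagPlaces h l)[i] (tagPlaces h l)[j] := by
  have hi' : i < l.length := by simpa [tagPlaces, tagWithPrefix] using hi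
  have hj' : j < l.length := by simpa [tagPlaces, tagWithPrefix] using hj
  simp only [tagPlaces, tagWithPrefix, List.getElem_ofFn, List.length_take, min_eq_left hi'.le,
    min_eq_left hj'.le, placeAll_take h l le_rfl]
  exact .inl (rlt_placeAll hl hz hi')

theorem isChain_unpermRead_tagPlaces {Lle : ℕ → ℕ → Prop} {π : ∀ n, Equiv.Perm (Fin n)}
    (hπ : PermOf Lle π) {h : ℕ → Fin r → ℤ} (hh : ∀ i j, Lle i j ∧ ¬ Lle j i → ZLt r (h i) (h j))
    {l : List α} (hl : l.IsChain (· > ·)) : (unpermRead π (tagPlaces h l)).IsChain (PLt11 r) :=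
  isChain_unpermRead π fun p q hpq => plt11_getElem_tagPlaces hl p.2 q.2 <|
    hh p q ⟨(hπ _ p q).mp hpq.le, fun hqp => hpq.not_ge ((hπ _ q p).mpr hqp)⟩

theorem lex_tagPlaces_iff (h : ℕ → Fin r → ℤ) (s t : List α) :
    List.Lex (PLt11 r) (tagPlaces h s) (tagPlaces h t) ↔ List.Lex (· < ·) s t := by
  rw [plt11_eq_prodLex, tagPlaces, tagPlaces, lex_tagWithPrefix_iff rlt_irrefl]

end Embedding

end PermutedLex

theorem stmt11_general {α : Type*} [LinearOrder α] (r : ℕ)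
    (Lle : ℕ → ℕ → Prop)
    (π : ∀ n, Equiv.Perm (Fin n)) (hπ : PermOf Lle π)
    (h : ∃ h : ℕ → Fin r → ℤ, ∀ i j : ℕ,
        (Lle i j ∧ ¬ Lle j i) ↔ ZLt r (h i) (h j)) :
    ∃ e : DecList α → IncList (PLt11 (α := α) r),
      ∀ σ τ : DecList α, TwoLt σ τ ↔ DLt (PLt11 (α := α) r) π (e σ) (e τ) := by
  obtain ⟨h, hh⟩ := h
  refine ⟨fun σ => ⟨_, PermutedLex.isChain_unpermRead_tagPlaces hπ (fun i j => (hh i j).mp) σ.2⟩,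
    fun σ τ => ?_⟩
  refine Iff.symm ((PermutedLex.dlt_iff_lex_permRead _ π _ _).trans ?_)
  simp only [PermutedLex.permRead_unpermRead]
  exact PermutedLex.lex_tagPlaces_iff h σ.1 τ.1

/-- If `L` embeds into `ℤ^r` (i.e. `L` is scattered of finite Hausdorff rank `r`),
then for every linear order `α` there is an order embedding of `2^α` into
`D_L(α · (ω·(α+1))^r)`. -/
theorem stmt11 {α : Type*} [LinearOrder α] (r : ℕ)
    (Lle : ℕ → ℕ → Prop) (hL : IsLinearOrder ℕ Lle)
    (π : ∀ n, Equiv.Perm (Fin n)) (hπ : PermOf Lle π)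
    (h : ∃ h : ℕ → Fin r → ℤ, ∀ i j : ℕ,
        (Lle i j ∧ ¬ Lle j i) ↔ ZLt r (h i) (h j)) :
    ∃ e : DecList α → IncList (PLt11 (α := α) r),
      ∀ σ τ : DecList α, TwoLt σ τ ↔ DLt (PLt11 (α := α) r) π (e σ) (e τ) :=
  stmt11_general r Lle π hπ h
end

section
/- Let σ_0 > σ_1 > σ_2 > ... be an infinite strictly descending sequence in 2^α for a linear order α, writing σ_n as the strictly decreasing sequence of its exponents σ_n(0) > σ_n(1) > ... Then there exists an infinite strictly descending sequence in α. Hence if α is well-founded, so is 2^α (classically). -/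
theorem List.exists_descending_of_lex_chains_descending {α : Type*} {r : α → α → Prop}
    (f : ℕ → List.chains r) (hf : ∀ n, List.lex_chains r (f (n + 1)) (f n)) :
    ∃ g : ℕ → α, ∀ n, r (g (n + 1)) (g n) := by
  by_contra hno
  have hwf : WellFounded r :=
    wellFounded_iff_isEmpty_descending_chain.2 ⟨fun ⟨g, hg⟩ ↦ hno ⟨g, hg⟩⟩
  exact (wellFounded_iff_isEmpty_descending_chain.1 hwf.list_chain').false ⟨f, hf⟩

/-- From an infinite strictly descending sequence in `2^α` one obtains an
infinite strictly descending sequence in `α`. -/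
theorem stmt14 {α : Type*} [LinearOrder α] (F : ℕ → DecList α)
    (hF : ∀ n, TwoLt (F (n + 1)) (F n)) :
    ∃ g : ℕ → α, ∀ n, g (n + 1) < g n :=
  -- `DecList α` and `TwoLt` are definitionally `List.chains (· < ·)` and `List.lex_chains (· < ·)`.
  List.exists_descending_of_lex_chains_descending (r := (· < ·)) F hF
end

section
/- Let L = (ℕ, ≤_L) be a linear order, α a well order, and suppose (σ_n)_{n∈ℕ} is a strictly descending sequence in D_L(α). Then, writing σ^L_{n,i} = σ_n(π_{len σ_n}(i)), there exist indices I(0) < I(1) < ... such that for all j: len σ_n ≥ j and σ^L_{n,i} = σ^L_{I(j),i} for all i < j whenever n ≥ I(j); moreover the map j ↦ σ^L_{I(j+1),j} is an order embedding of L into α. -/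
lemma inc_get_le_iff {α : Type*} [LinearOrder α] {l : List α} (h : l.Chain' (· < ·))
    (i j : Fin l.length) : l.get i ≤ l.get j ↔ i ≤ j := by
  have hp := List.isChain_iff_pairwise.mp h
  rw [List.pairwise_iff_get] at hp
  constructor
  · intro hle
    by_contra hij
    push_neg at hij
    exact absurd hle (not_le.mpr (hp _ _ hij))
  · intro hij
    rcases eq_or_lt_of_le hij with h' | h'
    · exact le_of_eq (by rw [h'])
    · exact (hp _ _ h').le

lemma eventually_const {α : Type*} [LinearOrder α]
    (hα : WellFounded ((· < ·) : α → α → Prop)) (a : ℕ → α)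
    (ha : ∀ m, a (m + 1) ≤ a m) : ∃ M, ∀ m, M ≤ m → a m = a M := by
  have anti : ∀ k p, a (p + k) ≤ a p := by
    intro k
    induction k with
    | zero => intro p; exact le_rfl
    | succ k ih => intro p; exact (ha (p + k)).trans (ih p)
  obtain ⟨x, ⟨M, rfl⟩, hmin⟩ := hα.has_min (Set.range a) (Set.range_nonempty a)
  refine ⟨M, fun m hm => ?_⟩
  have h1 : a m ≤ a M := by
    have := anti (m - M) M
    rwa [Nat.add_sub_cancel' hm] at this
  exact le_antisymm h1 (not_lt.mp (fun h => hmin (a m) ⟨m, rfl⟩ h))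

/-- Given a strictly descending sequence in `D_L(α)` for a well order `α`, there
are indices `I(0) < I(1) < ...` stabilizing the first `j` permuted readings for
`n ≥ I(j)`, and `j ↦ σ^L_{I(j+1),j}` is an order embedding of `L` into `α`. -/
theorem stmt15 {α : Type*} [LinearOrder α] (Lle : ℕ → ℕ → Prop)
    (hL : IsLinearOrder ℕ Lle) (π : ∀ n, Equiv.Perm (Fin n)) (hπ : PermOf Lle π)
    (hα : WellFounded ((· < ·) : α → α → Prop))
    (f : ℕ → IncList ((· < ·) : α → α → Prop))
    (hf : ∀ n, DLt (· < ·) π (f (n + 1)) (f n)) :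
    ∃ I : ℕ → ℕ, StrictMono I ∧
      (∀ j n, I j ≤ n → j ≤ (f n).1.length) ∧
      (∀ j n, I j ≤ n → ∀ i : ℕ, i < j →
        ∀ h1 : i < (f n).1.length, ∀ h2 : i < (f (I j)).1.length,
          (f n).1.get (π _ ⟨i, h1⟩) = (f (I j)).1.get (π _ ⟨i, h2⟩)) ∧
      ∃ g : ℕ → α,
        (∀ j n, I (j + 1) ≤ n → ∀ h : j < (f n).1.length,
          (f n).1.get (π _ ⟨j, h⟩) = g j) ∧
        (∀ j k : ℕ, Lle j k ↔ g j ≤ g k) := by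
  classical
  have key : ∀ j : ℕ, ∃ N : ℕ, (∀ n, N ≤ n → j ≤ (f n).1.length) ∧
      (∀ n, N ≤ n → ∀ i, i < j → ∀ h1 : i < (f n).1.length, ∀ h2 : i < (f N).1.length,
        (f n).1.get (π _ ⟨i, h1⟩) = (f N).1.get (π _ ⟨i, h2⟩)) := by
    intro j
    induction j with
    | zero =>
      exact ⟨0, fun n _ => Nat.zero_le _, fun n _ i hi => absurd hi (Nat.not_lt_zero i)⟩
    | succ j ih =>
      obtain ⟨N, hlen, hag⟩ := ih
      have hag2 : ∀ n n', N ≤ n → N ≤ n' → ∀ i, i < j →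
          ∀ h1 : i < (f n).1.length, ∀ h2 : i < (f n').1.length,
          (f n).1.get (π _ ⟨i, h1⟩) = (f n').1.get (π _ ⟨i, h2⟩) := by
        intro n n' hn hn' i hi h1 h2
        have hN : i < (f N).1.length := lt_of_lt_of_le hi (hlen N le_rfl)
        rw [hag n hn i hi h1 hN, hag n' hn' i hi h2 hN]
      have hltlen : ∀ n, N ≤ n → j < (f n).1.length := by
        intro n hn
        rcases lt_or_eq_of_le (hlen n hn) with h | h
        · exact h
        · exfalso
          rcases hf n with ⟨j', hs, ht, hlt', heq⟩ | ⟨hl, heq⟩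
          · have hj' : j' < j := h ▸ ht
            have := hag2 (n + 1) n (hn.trans (Nat.le_succ n)) hn j' hj' hs ht
            rw [this] at hlt'
            exact lt_irrefl _ hlt'
          · have := hlen (n + 1) (hn.trans (Nat.le_succ n))
            omega
      set a : ℕ → α :=
        fun m => (f (N + m)).1.get (π _ ⟨j, hltlen (N + m) (Nat.le_add_right _ _)⟩) with ha_def
      have ha : ∀ m, a (m + 1) ≤ a m := by
        intro m
        have hn : N ≤ N + m := Nat.le_add_right _ _
        have hn1 : N ≤ N + m + 1 := hn.trans (Nat.le_succ _)
        rcases hf (N + m) with ⟨j', hs, ht, hlt', heq⟩ | ⟨hl, heq⟩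
        · rcases lt_trichotomy j' j with h | h | h
          · exfalso
            have := hag2 (N + m + 1) (N + m) hn1 hn j' h hs ht
            rw [this] at hlt'
            exact lt_irrefl _ hlt'
          · subst h
            exact le_of_lt hlt'
          · exact le_of_eq (heq j (hltlen _ hn1) (hltlen _ hn) h)
        · exact le_of_eq (heq j (hltlen _ hn1) (hltlen _ hn))
      obtain ⟨M, hM⟩ := eventually_const hα a ha
      refine ⟨N + M, fun n hn => hltlen n (le_trans (Nat.le_add_right _ _) hn),
        fun n hn i hi h1 h2 => ?_⟩
      have hNn : N ≤ n := le_trans (Nat.le_add_right _ _) hn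
      rcases Nat.lt_succ_iff_lt_or_eq.mp hi with hij | rfl
      · exact hag2 n (N + M) hNn (Nat.le_add_right _ _) i hij h1 h2
      · obtain ⟨m, rfl⟩ : ∃ m, n = N + m := ⟨n - N, by omega⟩
        exact hM m (by omega)
  choose N hNlen hNag using key
  set I : ℕ → ℕ := fun j => Nat.rec (N 0) (fun j Ij => max (N (j + 1)) (Ij + 1)) j with hI_def
  have hIsucc : ∀ j, I (j + 1) = max (N (j + 1)) (I j + 1) := fun j => rfl
  have hImono : StrictMono I := by
    apply strictMono_nat_of_lt_succ
    intro n
    rw [hIsucc]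
    omega
  have hIN : ∀ j, N j ≤ I j := by
    intro j
    cases j with
    | zero => exact le_rfl
    | succ j => rw [hIsucc]; exact le_max_left _ _
  have hIlen : ∀ j n, I j ≤ n → j ≤ (f n).1.length :=
    fun j n hn => hNlen j n ((hIN j).trans hn)
  have hIag : ∀ j n, I j ≤ n → ∀ i, i < j →
      ∀ h1 : i < (f n).1.length, ∀ h2 : i < (f (I j)).1.length,
      (f n).1.get (π _ ⟨i, h1⟩) = (f (I j)).1.get (π _ ⟨i, h2⟩) := by
    intro j n hn i hi h1 h2
    have hN : i < (f (N j)).1.length := lt_of_lt_of_le hi (hNlen j (N j) le_rfl)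
    rw [hNag j n ((hIN j).trans hn) i hi h1 hN, hNag j (I j) (hIN j) i hi h2 hN]
  have hglen : ∀ j, j < (f (I (j + 1))).1.length :=
    fun j => Nat.lt_of_succ_le (hIlen (j + 1) (I (j + 1)) le_rfl)
  set g : ℕ → α := fun j => (f (I (j + 1))).1.get (π _ ⟨j, hglen j⟩) with hg_def
  have hg : ∀ j n, I (j + 1) ≤ n → ∀ h : j < (f n).1.length,
      (f n).1.get (π _ ⟨j, h⟩) = g j :=
    fun j n hn h => hIag (j + 1) n hn j (Nat.lt_succ_self j) h (hglen j)
  refine ⟨I, hImono, hIlen, hIag, g, hg, fun j k => ?_⟩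
  set n := max (I (j + 1)) (I (k + 1)) with hn_def
  have hj : j < (f n).1.length :=
    Nat.lt_of_succ_le (hIlen (j + 1) n (le_max_left _ _))
  have hk : k < (f n).1.length :=
    Nat.lt_of_succ_le (hIlen (k + 1) n (le_max_right _ _))
  have hgj : g j = (f n).1.get (π _ ⟨j, hj⟩) := (hg j n (le_max_left _ _) hj).symm
  have hgk : g k = (f n).1.get (π _ ⟨k, hk⟩) := (hg k n (le_max_right _ _) hk).symm
  rw [hgj, hgk, inc_get_le_iff (f n).2, Fin.le_def]
  exact (hπ (f n).1.length ⟨j, hj⟩ ⟨k, hk⟩).symm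
end

section
/- In the proof of the embedding of (1+α)^γ into D_L(α·2^γ): given a strictly descending sequence γ_0 > γ_1 > ... > γ_{k-1} in γ and terms σ_j ∈ 2^γ defined recursively with σ_0 = 2^{γ_0} and σ_{i+1} chosen from {2^{γ_{i+1}}} ∪ {σ_j + 2^{γ_{i+1}} : j ≤ i}, there is exactly one such choice of σ_{i+1} making the partial assignment e(π_k(i)) = α·σ_i + α_i order-preserving on {0,...,i+1} at each stage. -/
/-- The strict order on `α · 2^γ`, where an element is a pair of a (decreasing)
list of exponents in `γ` and an element of `α`, the list taking priority. -/
def PLt16 {γ α : Type*} [LinearOrder γ] [LinearOrder α] (p q : List γ × α) : Prop :=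
  List.Lex (· < ·) p.1 q.1 ∨ (p.1 = q.1 ∧ p.2 < q.2)

/-!
The new point `i + 1` receives the exponent `γ_{i+1}`, which lies below every exponent already
used. Hence `[γ_{i+1}]` lies lexicographically below all of the `σ_j`, and `σ_j + 2^{γ_{i+1}}` is
the immediate successor of `σ_j` among the candidates together with the `σ_j`: a list `σ_u` lies
below it iff `σ_u ≤ σ_j`. So the candidates realize pairwise different cuts of `{σ_j : j ≤ i}`,
one for each down-set of this chain, and exactly one of them realizes the cut demanded by the
position of `i + 1` in the order `π_k`.
-/

namespace List

variable {γ : Type*} [LinearOrder γ] {b : γ} {l m : List γ}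

theorem le_of_mem_of_getLast?_eq_some (hl : l.IsChain (· > ·)) (hlast : l.getLast? = some b)
    {x : γ} (hx : x ∈ l) : b ≤ x := by
  have := ((isChain_iff_pairwise.1 hl).imp le_of_lt).rel_getLast hx
  rwa [getLast_of_getLast?_eq_some hlast] at this

theorem isChain_append_singleton (hl : l.IsChain (· > ·)) (hb : ∀ x ∈ l, b < x) :
    (l ++ [b]).IsChain (· > ·) :=
  hl.append (isChain_singleton b) fun x hx y hy => by
    rw [head?_cons, Option.mem_some_iff] at hy
    exact hy ▸ hb x (mem_of_getLast? hx)

theorem singleton_lt_of_forall_lt (hl : l ≠ []) (hb : ∀ x ∈ l, b < x) : [b] < l := by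
  obtain ⟨x, t, rfl⟩ := exists_cons_of_ne_nil hl
  exact Lex.rel (hb x mem_cons_self)

theorem lt_append_singleton (l : List γ) (b : γ) : l < l ++ [b] := by
  simpa using Lex.append_left (· < ·) (Lex.nil : Lex (· < ·) [] [b]) l

theorem append_singleton_lt_of_lt (h : l < m) (hb : ∀ x ∈ m, b < x) : l ++ [b] < m := by
  induction h with
  | nil => exact Lex.rel (hb _ mem_cons_self)
  | cons _ ih => exact Lex.cons (ih fun x hx => hb x (mem_cons_of_mem _ hx))
  | rel h => exact Lex.rel h

theorem lt_append_singleton_iff (hb : ∀ x ∈ l, b < x) : l < m ++ [b] ↔ l ≤ m := by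
  refine ⟨fun h => not_lt.1 fun hml => (append_singleton_lt_of_lt hml hb).not_gt h, fun h => ?_⟩
  rcases h.lt_or_eq with h | rfl
  · exact Lex.append_right _ _ h
  · exact lt_append_singleton l b

end List

theorem pLt16_iff_lt_fst {γ α : Type*} [LinearOrder γ] [LinearOrder α] {p q : List γ × α}
    (h : p.1 = q.1 → p.2 = q.2) : PLt16 p q ↔ p.1 < q.1 := by
  refine ⟨fun hpq => hpq.elim id fun ⟨h₁, h₂⟩ => ?_, Or.inl⟩
  exact absurd (h h₁ ▸ h₂) (lt_irrefl _)

theorem forall_insert_lt_iff_lt_iff {ι β X : Type*} [LinearOrder β] [LinearOrder X]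
    {r : ι → β} {f : ι → X} {S : Set ι} {I : ι}
    (hr : ∀ u ∈ S, r u ≠ r I) (hf : ∀ u ∈ S, f u ≠ f I)
    (hS : ∀ u ∈ S, ∀ v ∈ S, (r u < r v ↔ f u < f v)) :
    (∀ u ∈ insert I S, ∀ v ∈ insert I S, (r u < r v ↔ f u < f v)) ↔
      ∀ u ∈ S, (r u < r I ↔ f u < f I) := by
  refine ⟨fun h u hu => h u (Or.inr hu) I (Or.inl rfl), fun h => ?_⟩
  rintro u (rfl | hu) v (rfl | hv)
  · simp only [lt_irrefl]
  · rw [← not_iff_not, not_lt, not_lt, (hr v hv).le_iff_lt, (hf v hv).le_iff_lt]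
    exact h v hv
  · exact h u hu
  · exact hS u hu v hv

section Candidates

variable {ι γ : Type*} [LinearOrder γ] {σ : ι → List γ} {S : Set ι} {b : γ}

theorem isChain_of_candidate (hchain : ∀ j ∈ S, (σ j).IsChain (· > ·))
    (hb : ∀ j ∈ S, ∀ x ∈ σ j, b < x) {s : List γ} (hs : s = [b] ∨ ∃ j ∈ S, s = σ j ++ [b]) :
    s.IsChain (· > ·) := by
  rcases hs with rfl | ⟨j, hj, rfl⟩
  · exact List.isChain_singleton b
  · exact List.isChain_append_singleton (hchain j hj) (hb j hj)

theorem ne_of_candidate (hb : ∀ j ∈ S, ∀ x ∈ σ j, b < x) {s : List γ}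
    (hs : s = [b] ∨ ∃ j ∈ S, s = σ j ++ [b]) : ∀ u ∈ S, σ u ≠ s := fun u hu h => by
  have hbs : b ∈ s := by rcases hs with rfl | ⟨j, -, rfl⟩ <;> simp
  exact lt_irrefl b (hb u hu b (h ▸ hbs))

theorem eq_of_forall_lt_iff_lt_of_candidates (hb : ∀ j ∈ S, ∀ x ∈ σ j, b < x)
    (hne : ∀ j ∈ S, σ j ≠ []) {s t : List γ}
    (hs : s = [b] ∨ ∃ j ∈ S, s = σ j ++ [b]) (ht : t = [b] ∨ ∃ j ∈ S, t = σ j ++ [b])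
    (h : ∀ u ∈ S, (σ u < s ↔ σ u < t)) : s = t := by
  have not_lt_singleton : ∀ u ∈ S, ¬ σ u < [b] := fun u hu =>
    not_lt.2 (List.singleton_lt_of_forall_lt (hne u hu) (hb u hu)).le
  have lt_succ : ∀ u ∈ S, ∀ j, σ u < σ j ++ [b] ↔ σ u ≤ σ j := fun u hu j =>
    List.lt_append_singleton_iff (hb u hu)
  rcases hs with rfl | ⟨m, hm, rfl⟩ <;> rcases ht with rfl | ⟨n, hn, rfl⟩
  · rfl
  · exact absurd ((h n hn).2 ((lt_succ n hn n).2 le_rfl)) (not_lt_singleton n hn)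
  · exact absurd ((h m hm).1 ((lt_succ m hm m).2 le_rfl)) (not_lt_singleton m hm)
  · have hmn := (lt_succ m hm n).1 ((h m hm).1 ((lt_succ m hm m).2 le_rfl))
    have hnm := (lt_succ n hn m).1 ((h n hn).2 ((lt_succ n hn n).2 le_rfl))
    rw [le_antisymm hmn hnm]

theorem exists_candidate_forall_lt_iff {β : Type*} [LinearOrder β] {r : ι → β} (ρ : β)
    (hS : S.Finite) (hb : ∀ j ∈ S, ∀ x ∈ σ j, b < x) (hne : ∀ j ∈ S, σ j ≠ [])
    (hmono : ∀ u ∈ S, ∀ v ∈ S, (r u < r v ↔ σ u < σ v)) :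
    ∃ s, (s = [b] ∨ ∃ j ∈ S, s = σ j ++ [b]) ∧ ∀ u ∈ S, (r u < ρ ↔ σ u < s) := by
  by_cases hT : {u ∈ S | r u < ρ}.Nonempty
  · obtain ⟨j, ⟨hj, hjρ⟩, hjmax⟩ := Set.exists_max_image _ r (hS.subset fun _ h => h.1) hT
    refine ⟨σ j ++ [b], Or.inr ⟨j, hj, rfl⟩, fun u hu => ?_⟩
    rw [List.lt_append_singleton_iff (hb u hu), ← not_lt, ← hmono j hj u hu, not_lt]
    exact ⟨fun huρ => hjmax u ⟨hu, huρ⟩, fun hle => hle.trans_lt hjρ⟩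
  · refine ⟨[b], Or.inl rfl, fun u hu => iff_of_false (fun huρ => hT ⟨u, hu, huρ⟩) ?_⟩
    exact not_lt.2 (List.singleton_lt_of_forall_lt (hne u hu) (hb u hu)).le

theorem forall_insert_lt_iff_pLt16_update_iff {α β : Type*} [LinearOrder α] [LinearOrder β]
    [DecidableEq ι] {r : ι → β} {a : ι → α} {I : ι} {s : List γ}
    (hr : ∀ u ∈ S, r u ≠ r I) (hσ : Set.InjOn σ S) (hs : ∀ u ∈ S, σ u ≠ s)
    (hmono : ∀ u ∈ S, ∀ v ∈ S, (r u < r v ↔ σ u < σ v)) :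
    (∀ u ∈ insert I S, ∀ v ∈ insert I S,
        (r u < r v ↔ PLt16 (Function.update σ I s u, a u) (Function.update σ I s v, a v))) ↔
      ∀ u ∈ S, (r u < r I ↔ σ u < s) := by
  have hIS : I ∉ S := fun hI => hr I hI rfl
  set f := Function.update σ I s
  have hfI : f I = s := Function.update_self I s σ
  have hfS : ∀ u ∈ S, f u = σ u := fun u hu =>
    Function.update_of_ne (ne_of_mem_of_not_mem hu hIS) s σ
  have hinj : ∀ u ∈ insert I S, ∀ v ∈ insert I S, f u = f v → u = v := by
    intro u hu v hv h
    rcases hu with rfl | hu <;> rcases hv with rfl | hv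
    · rfl
    · rw [hfI, hfS v hv] at h; exact absurd h.symm (hs v hv)
    · rw [hfI, hfS u hu] at h; exact absurd h (hs u hu)
    · rw [hfS u hu, hfS v hv] at h; exact hσ hu hv h
  calc _ ↔ ∀ u ∈ insert I S, ∀ v ∈ insert I S, (r u < r v ↔ f u < f v) :=
        forall₂_congr fun u hu => forall₂_congr fun v hv => by
          rw [pLt16_iff_lt_fst fun h => congrArg a (hinj u hu v hv h)]
    _ ↔ ∀ u ∈ S, (r u < r I ↔ f u < f I) := by
        refine forall_insert_lt_iff_lt_iff hr (fun u hu => ?_) fun u hu v hv => ?_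
        · rw [hfS u hu, hfI]; exact hs u hu
        · rw [hfS u hu, hfS v hv]; exact hmono u hu v hv
    _ ↔ _ := forall₂_congr fun u hu => by rw [hfS u hu, hfI]

end Candidates

theorem forall₂_val_le_succ_iff {k i : ℕ} (hik : i + 1 < k) {P : Fin k → Fin k → Prop} :
    (∀ u v : Fin k, (u : ℕ) ≤ i + 1 → (v : ℕ) ≤ i + 1 → P u v) ↔
      ∀ u ∈ insert ⟨i + 1, hik⟩ {j : Fin k | (j : ℕ) ≤ i},
        ∀ v ∈ insert ⟨i + 1, hik⟩ {j : Fin k | (j : ℕ) ≤ i}, P u v := by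
  have hdom : ∀ u : Fin k, (u : ℕ) ≤ i + 1 ↔ u ∈ insert ⟨i + 1, hik⟩ {j : Fin k | (j : ℕ) ≤ i} :=
    fun u => by
      rw [Set.mem_insert_iff, Fin.ext_iff]
      exact Nat.le_succ_iff.trans or_comm
  exact ⟨fun h u hu v hv => h u v ((hdom u).2 hu) ((hdom v).2 hv),
    fun h u v hu hv => h u ((hdom u).1 hu) v ((hdom v).1 hv)⟩

/-- The existence-and-uniqueness step in the construction of the embedding of
`(1+α)^γ` into `D_L(α·2^γ)`: given `γ_0 > ... > γ_{k-1}` in `γ`, values `a_j ∈ α`,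
and decreasing lists `σ_j` for `j ≤ i` (with `σ_0 = ⟨γ_0⟩`, each `σ_j` ending in
`γ_j`) such that `e(π_k(j)) = α·σ_j + a_j` is order-preserving on `{0,…,i}`,
there is exactly one `s ∈ {2^{γ_{i+1}}} ∪ {σ_j + 2^{γ_{i+1}} : j ≤ i}` making the
extended assignment order-preserving on `{0,…,i+1}`. -/
theorem stmt16 {γ α : Type*} [LinearOrder γ] [LinearOrder α]
    (π : ∀ n, Equiv.Perm (Fin n))
    (k i : ℕ) (hik : i + 1 < k)
    (c : Fin k → γ) (hc : ∀ u v : Fin k, u < v → c v < c u)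
    (a : Fin k → α) (σ : Fin k → List γ)
    (hchain : ∀ j : Fin k, (j : ℕ) ≤ i → (σ j).Chain' (· > ·))
    (hlast : ∀ j : Fin k, (j : ℕ) ≤ i → (σ j).getLast? = some (c j))
    (hmono : ∀ u v : Fin k, (u : ℕ) ≤ i → (v : ℕ) ≤ i →
      (((π k u : ℕ) < (π k v : ℕ)) ↔ PLt16 (σ u, a u) (σ v, a v))) :
    ∃! s : List γ,
      s.Chain' (· > ·) ∧
      (s = [c ⟨i + 1, hik⟩] ∨ ∃ j : Fin k, (j : ℕ) ≤ i ∧ s = σ j ++ [c ⟨i + 1, hik⟩]) ∧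
      (∀ u v : Fin k, (u : ℕ) ≤ i + 1 → (v : ℕ) ≤ i + 1 →
        (((π k u : ℕ) < (π k v : ℕ)) ↔
          PLt16 (Function.update σ ⟨i + 1, hik⟩ s u, a u)
                (Function.update σ ⟨i + 1, hik⟩ s v, a v))) := by
  set I : Fin k := ⟨i + 1, hik⟩
  set S : Set (Fin k) := {j | (j : ℕ) ≤ i}
  have hbelow : ∀ j ∈ S, ∀ x ∈ σ j, c I < x := fun j hj x hx =>
    (hc j I (Fin.lt_def.2 (Nat.lt_succ_of_le hj))).trans_le
      (List.le_of_mem_of_getLast?_eq_some (hchain j hj) (hlast j hj) hx)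
  have hne : ∀ j ∈ S, σ j ≠ [] := fun j hj h => by simpa [h] using hlast j hj
  have hσ : Set.InjOn σ S := Set.InjOn.of_comp (g := List.getLast?) <|
    ((Option.some_injective γ).comp (StrictAnti.injective hc)).injOn.congr
      fun j hj => (hlast j hj).symm
  have hσmono : ∀ u ∈ S, ∀ v ∈ S, ((π k u : ℕ) < π k v ↔ σ u < σ v) := fun u hu v hv =>
    (hmono u v hu hv).trans (pLt16_iff_lt_fst fun h => congrArg a (hσ hu hv h))
  have hr : ∀ u ∈ S, (π k u : ℕ) ≠ π k I := fun u (hu : (u : ℕ) ≤ i) h => by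
    have : (u : ℕ) = i + 1 := congrArg Fin.val ((π k).injective (Fin.ext h))
    omega
  have hadm := fun (s : List γ) (hs : s = [c I] ∨ ∃ j ∈ S, s = σ j ++ [c I]) =>
    (forall₂_val_le_succ_iff hik).trans <|
      forall_insert_lt_iff_pLt16_update_iff (a := a) hr hσ (ne_of_candidate hbelow hs) hσmono
  obtain ⟨s, hs, hcut⟩ :=
    exists_candidate_forall_lt_iff (π k I : ℕ) S.toFinite hbelow hne hσmono
  refine ⟨s, ⟨isChain_of_candidate hchain hbelow hs, hs, (hadm s hs).2 hcut⟩, ?_⟩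
  rintro t ⟨-, ht, htadm⟩
  exact eq_of_forall_lt_iff_lt_of_candidates hbelow hne ht hs fun u hu =>
    ((hadm t ht).1 htadm u hu).symm.trans (hcut u hu)
end

section
/- Let D be a predilator with trace elements (σ,m), (τ,n), (ρ,k) pairwise distinct, and for distinct trace elements define p (the minimal secure number) as in Girard's theory. Then p_ρ^τ ≥ min(p_ρ^σ, p_σ^τ). -/
/-- A (coded) predilator: a monotone functor from finite linear orders
`{0,…,n-1}` (with order embeddings) to linear orders, equipped with natural
support functions satisfying the support condition. -/
structure Predilator where
  obj : ℕ → Type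
  lt : ∀ n, obj n → obj n → Prop
  str : ∀ n, IsStrictTotalOrder (obj n) (lt n)
  map : ∀ {m n : ℕ}, (Fin m ↪o Fin n) → obj m → obj n
  map_id : ∀ (n : ℕ) (σ : obj n),
    map (OrderEmbedding.ofStrictMono id strictMono_id) σ = σ
  map_comp : ∀ {m n k : ℕ} (f : Fin m ↪o Fin n) (g : Fin n ↪o Fin k) (σ : obj m),
    map (f.trans g) σ = map g (map f σ)
  map_lt : ∀ {m n : ℕ} (f : Fin m ↪o Fin n) (σ τ : obj m),
    lt m σ τ → lt n (map f σ) (map f τ)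
  monotone : ∀ {m n : ℕ} (f g : Fin m ↪o Fin n), (∀ i, f i ≤ g i) →
    ∀ σ : obj m, ¬ lt n (map g σ) (map f σ)
  supp : ∀ n, obj n → Finset (Fin n)
  supp_natural : ∀ {m n : ℕ} (f : Fin m ↪o Fin n) (σ : obj m),
    supp n (map f σ) = (supp m σ).map f.toEmbedding
  supp_cond : ∀ {m n : ℕ} (f : Fin m ↪o Fin n) (τ : obj n),
    ↑(supp n τ) ⊆ Set.range f → ∃ σ : obj m, map f σ = τ

/-- The embedding `e_i : n → 2n` with `e_i(i) = 2i+1` and `e_i(j) = 2j` for `j ≠ i`. -/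
def eEmb (n : ℕ) (i : Fin n) : Fin n ↪o Fin (2 * n) :=
  OrderEmbedding.ofStrictMono
    (fun j => if j = i then ⟨2 * (j : ℕ) + 1, by have := j.isLt; omega⟩
              else ⟨2 * (j : ℕ), by have := j.isLt; omega⟩)
    (by
      intro j k hjk
      simp only []
      split <;> split <;> simp only [Fin.mk_lt_mk] <;> omega)

/-- `π` is the priority permutation of the trace element `σ`:
`D(e_{π(0)})(σ) > … > D(e_{π(n-1)})(σ)`. -/
def IsPriorityPerm (D : Predilator) {n : ℕ} (σ : D.obj n) (π : Equiv.Perm (Fin n)) : Prop :=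
  ∀ i j : Fin n, i < j →
    D.lt (2 * n) (D.map (eEmb n (π j)) σ) (D.map (eEmb n (π i)) σ)

/-- `p ≤ P_σ^τ`: the permutations `π_σ` and `π_τ` induce the same relative order
on indices below `p`. -/
def Compatible {m n : ℕ} (πσ : Equiv.Perm (Fin m)) (πτ : Equiv.Perm (Fin n))
    (p : ℕ) : Prop :=
  ∃ hm : p ≤ m, ∃ hn : p ≤ n, ∀ i j : Fin p,
    (πσ (Fin.castLE hm i) < πσ (Fin.castLE hm j) ↔
      πτ (Fin.castLE hn i) < πτ (Fin.castLE hn j))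

/-- `f` and `g` agree on the first `p` priority positions:
`f(π_σ(i)) = g(π_τ(i))` for all `i < p`. -/
def Agrees {m n N : ℕ} (f : Fin m ↪o Fin N) (g : Fin n ↪o Fin N)
    (πσ : Equiv.Perm (Fin m)) (πτ : Equiv.Perm (Fin n)) (p : ℕ) : Prop :=
  ∀ i : ℕ, i < p → ∀ him : i < m, ∀ hin : i < n,
    ((f (πσ ⟨i, him⟩) : ℕ) = (g (πτ ⟨i, hin⟩) : ℕ))

/-- `p` is secure for the distinct trace elements `(σ,m)` and `(τ,n)`: the truth
value of `D(f)(σ) < D(g)(τ)` depends only on the values `f(π_σ(i)) = g(π_τ(i))`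
for `i < p`. -/
def Secure (D : Predilator) {m n : ℕ} (σ : D.obj m) (τ : D.obj n)
    (πσ : Equiv.Perm (Fin m)) (πτ : Equiv.Perm (Fin n)) (p : ℕ) : Prop :=
  Compatible πσ πτ p ∧
  ∀ (f f' : Fin m ↪o Fin (m + n)) (g g' : Fin n ↪o Fin (m + n)),
    Agrees f g πσ πτ p → Agrees f' g' πσ πτ p →
    (D.lt (m + n) (D.map f σ) (D.map g τ) ↔ D.lt (m + n) (D.map f' σ) (D.map g' τ))

/-- `p = p_σ^τ` is the minimal secure number. -/
def MinSecure (D : Predilator) {m n : ℕ} (σ : D.obj m) (τ : D.obj n)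
    (πσ : Equiv.Perm (Fin m)) (πτ : Equiv.Perm (Fin n)) (p : ℕ) : Prop :=
  Secure D σ τ πσ πτ p ∧ ∀ q : ℕ, q < p → ¬ Secure D σ τ πσ πτ q

/-!
Suppose `p := p_ρ^τ` were below both `p_ρ^σ` and `p_σ^τ`. Then `p` is insecure for `(ρ,σ)`
and for `(σ,τ)`, so each pair is realized, with agreement on the first `p` priority
positions, both with `<` and with `¬ <`. Amalgamating the two copies of `σ` puts `ρ`, `σ`,
`τ` into one `D(N)`; agreement passes through `σ` because `p ≤ m`, and the outcomes compose
since `D(N)` is linearly ordered. Compressing back to `k + n` points gives `p`-agreeing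
pairs for `(ρ,τ)` with both outcomes, so `p` is not secure for `(ρ,τ)` either.
-/

open Finset

theorem exists_orderEmbedding_trans_eq {α β γ : Type*} [LinearOrder α] [Preorder β]
    [Preorder γ]
    (f : α ↪o γ) (j : β ↪o γ) (h : Set.range f ⊆ Set.range j) :
    ∃ w : α ↪o β, w.trans j = f := by
  choose w hw using fun x => h ⟨x, rfl⟩
  refine ⟨OrderEmbedding.ofStrictMono w fun x y hxy => ?_, RelEmbedding.ext hw⟩
  rw [← j.lt_iff_lt, hw, hw]
  exact f.strictMono hxy

theorem exists_fin_factorization {γ : Type*} [LinearOrder γ] {A B s : ℕ}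
    (f₁ : Fin A ↪o γ) (f₂ : Fin B ↪o γ) (hs : A + B ≤ s)
    (hsuperset : ∀ S : Finset γ, #S ≤ s → ∃ T, S ⊆ T ∧ #T = s) :
    ∃ (F₁ : Fin A ↪o Fin s) (F₂ : Fin B ↪o Fin s) (j : Fin s ↪o γ),
      F₁.trans j = f₁ ∧ F₂.trans j = f₂ := by
  let S := univ.map f₁.toEmbedding ∪ univ.map f₂.toEmbedding
  have hS : #S ≤ s := (card_union_le _ _).trans (by simpa using hs)
  obtain ⟨T, hST, hT⟩ := hsuperset S hS
  have hrange : ∀ x ∈ S, x ∈ Set.range (T.orderEmbOfFin hT) := fun x hx => by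
    rw [range_orderEmbOfFin]; exact hST hx
  obtain ⟨F₁, hF₁⟩ := exists_orderEmbedding_trans_eq f₁ (T.orderEmbOfFin hT)
    (by rintro _ ⟨x, rfl⟩; exact hrange _ (by simp [S]))
  obtain ⟨F₂, hF₂⟩ := exists_orderEmbedding_trans_eq f₂ (T.orderEmbOfFin hT)
    (by rintro _ ⟨x, rfl⟩; exact hrange _ (by simp [S]))
  exact ⟨F₁, F₂, _, hF₁, hF₂⟩

/-- `g x` goes to `(x + 1, 0)` whatever the codomain, so two embeddings of `Fin m` get the
same keys on common points; points off the range are separated by their own value. -/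
def amalgamationKey {m A : ℕ} (g : Fin m ↪o Fin A) (a : Fin A) : ℕ ×ₗ ℕ :=
  toLex (#{x | g x ≤ a}, if ∃ x, g x = a then 0 else (a : ℕ) + 1)

theorem amalgamationKey_apply {m A : ℕ} (g : Fin m ↪o Fin A) (x : Fin m) :
    amalgamationKey g (g x) = toLex ((x : ℕ) + 1, 0) := by
  have : ({y | y ≤ x} : Finset (Fin m)) = Iic x := by ext; simp
  simp [amalgamationKey, this]

theorem amalgamationKey_strictMono {m A : ℕ} (g : Fin m ↪o Fin A) :
    StrictMono (amalgamationKey g) := by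
  intro a a' haa'
  have hsub : ({x | g x ≤ a} : Finset (Fin m)) ⊆ ({x | g x ≤ a'} : Finset (Fin m)) := by
    intro x; simpa using fun hx => hx.trans haa'.le
  refine Prod.Lex.toLex_lt_toLex'.2 ⟨card_le_card hsub, fun hcard => ?_⟩
  have hnot : ¬ ∃ y, g y = a' := by
    rintro ⟨y, rfl⟩
    refine (card_lt_card (ssubset_iff_of_subset hsub |>.2 ⟨y, ?_, ?_⟩)).ne hcard <;>
      simp [haa'.not_ge]
  simp only [if_neg hnot]
  split_ifs <;> simp only [Fin.lt_def] at haa' <;> omega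

theorem exists_amalgamation {m A B : ℕ} (g₁ : Fin m ↪o Fin A) (g₂ : Fin m ↪o Fin B) :
    ∃ (w₁ : Fin A ↪o Fin (A + B)) (w₂ : Fin B ↪o Fin (A + B)),
      g₁.trans w₁ = g₂.trans w₂ := by
  obtain ⟨w₁, w₂, j, hw₁, hw₂⟩ := exists_fin_factorization
    (OrderEmbedding.ofStrictMono _ (amalgamationKey_strictMono g₁))
    (OrderEmbedding.ofStrictMono _ (amalgamationKey_strictMono g₂)) le_rfl
    fun S hS => Infinite.exists_superset_card_eq S _ hS
  refine ⟨w₁, w₂, RelEmbedding.ext fun x => j.injective ?_⟩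
  have h₁ := congrArg (· (g₁ x)) hw₁
  have h₂ := congrArg (· (g₂ x)) hw₂
  simp only [RelEmbedding.coe_trans, Function.comp_apply, OrderEmbedding.coe_ofStrictMono,
    amalgamationKey_apply] at h₁ h₂ ⊢
  rw [h₁, h₂]

theorem exists_compression {k n N : ℕ} (hN : k + n ≤ N) (f : Fin k ↪o Fin N)
    (h : Fin n ↪o Fin N) :
    ∃ (F : Fin k ↪o Fin (k + n)) (H : Fin n ↪o Fin (k + n)) (j : Fin (k + n) ↪o Fin N),
      F.trans j = f ∧ H.trans j = h :=
  exists_fin_factorization f h le_rfl fun _ hS => exists_superset_card_eq hS (by simpa using hN)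

section Agrees

variable {m n N : ℕ} {πσ : Equiv.Perm (Fin m)} {πτ : Equiv.Perm (Fin n)} {p : ℕ}

theorem agrees_trans_iff {N' : ℕ} (f : Fin m ↪o Fin N) (g : Fin n ↪o Fin N)
    (w : Fin N ↪o Fin N') :
    Agrees (f.trans w) (g.trans w) πσ πτ p ↔ Agrees f g πσ πτ p := by
  simp only [Agrees, Fin.val_inj, RelEmbedding.coe_trans, Function.comp_apply, w.eq_iff_eq]

theorem Agrees.trans {k : ℕ} {πρ : Equiv.Perm (Fin k)} {f : Fin k ↪o Fin N}
    {g : Fin m ↪o Fin N} {h : Fin n ↪o Fin N} (hfg : Agrees f g πρ πσ p)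
    (hgh : Agrees g h πσ πτ p) (hpm : p ≤ m) :
    Agrees f h πρ πτ p := fun i hip hik hin =>
  (hfg i hip hik (hip.trans_le hpm)).trans (hgh i hip _ hin)

end Agrees

theorem Compatible.mono {m n : ℕ} {πσ : Equiv.Perm (Fin m)} {πτ : Equiv.Perm (Fin n)}
    {p q : ℕ} (h : Compatible πσ πτ p) (hqp : q ≤ p) : Compatible πσ πτ q := by
  obtain ⟨hm, hn, hcomp⟩ := h
  exact ⟨hqp.trans hm, hqp.trans hn, fun i j =>
    hcomp (Fin.castLE hqp i) (Fin.castLE hqp j)⟩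

namespace Predilator

attribute [instance] Predilator.str

variable (D : Predilator) {N : ℕ}

theorem lt_trans {a b c : D.obj N} : D.lt N a b → D.lt N b c → D.lt N a c :=
  (D.str N).trans a b c

theorem not_lt_trans {a b c : D.obj N} (hab : ¬ D.lt N a b) (hbc : ¬ D.lt N b c) :
    ¬ D.lt N a c := fun hac => by
  rcases trichotomous_of (D.lt N) b c with hbc' | rfl | hcb
  · exact hbc hbc'
  · exact hab hac
  · exact hab (D.lt_trans hac hcb)

theorem map_lt_map_iff {N' : ℕ} (j : Fin N ↪o Fin N') (a b : D.obj N) :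
    D.lt N' (D.map j a) (D.map j b) ↔ D.lt N a b := by
  refine ⟨fun h => ?_, D.map_lt j a b⟩
  rcases trichotomous_of (D.lt N) a b with hab | rfl | hba
  · exact hab
  · exact absurd h ((D.str N').irrefl _)
  · exact absurd (D.lt_trans h (D.map_lt j b a hba)) ((D.str N').irrefl _)

end Predilator

theorem exists_agrees_of_not_secure {D : Predilator} {m n : ℕ} {σ : D.obj m} {τ : D.obj n}
    {πσ : Equiv.Perm (Fin m)} {πτ : Equiv.Perm (Fin n)} {p : ℕ}
    (hcomp : Compatible πσ πτ p) (hns : ¬ Secure D σ τ πσ πτ p) :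
    (∃ f g, Agrees f g πσ πτ p ∧ D.lt (m + n) (D.map f σ) (D.map g τ)) ∧
    (∃ f g, Agrees f g πσ πτ p ∧ ¬ D.lt (m + n) (D.map f σ) (D.map g τ)) := by
  simp only [Secure, hcomp, true_and, not_forall] at hns
  obtain ⟨f, f', g, g', hfg, hfg', hne⟩ := hns
  by_cases hlt : D.lt (m + n) (D.map f σ) (D.map g τ)
  · exact ⟨⟨f, g, hfg, hlt⟩, f', g', hfg', fun h' => hne (iff_of_true hlt h')⟩
  · exact ⟨⟨f', g', hfg', not_not.1 fun h' => hne (iff_of_false hlt h')⟩, f, g, hfg, hlt⟩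

theorem MinSecure.exists_agrees_of_lt {D : Predilator} {m n : ℕ} {σ : D.obj m} {τ : D.obj n}
    {πσ : Equiv.Perm (Fin m)} {πτ : Equiv.Perm (Fin n)} {p q : ℕ}
    (h : MinSecure D σ τ πσ πτ p) (hqp : q < p) :
    (∃ f g, Agrees f g πσ πτ q ∧ D.lt (m + n) (D.map f σ) (D.map g τ)) ∧
    (∃ f g, Agrees f g πσ πτ q ∧ ¬ D.lt (m + n) (D.map f σ) (D.map g τ)) :=
  exists_agrees_of_not_secure (h.1.1.mono hqp.le) (h.2 q hqp)

theorem exists_agrees_amalgamation (D : Predilator) {k m n : ℕ}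
    (ρ : D.obj k) (σ : D.obj m) (τ : D.obj n)
    {πρ : Equiv.Perm (Fin k)} {πσ : Equiv.Perm (Fin m)} {πτ : Equiv.Perm (Fin n)} {p : ℕ}
    (hpm : p ≤ m) {f : Fin k ↪o Fin (k + m)} {g : Fin m ↪o Fin (k + m)}
    {G : Fin m ↪o Fin (m + n)} {h : Fin n ↪o Fin (m + n)}
    (hfg : Agrees f g πρ πσ p) (hGh : Agrees G h πσ πτ p) :
    ∃ (F : Fin k ↪o Fin (k + n)) (H : Fin n ↪o Fin (k + n)), Agrees F H πρ πτ p ∧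
      ∃ (N : ℕ) (a b c : D.obj N),
        (D.lt (k + m) (D.map f ρ) (D.map g σ) ↔ D.lt N a b) ∧
        (D.lt (m + n) (D.map G σ) (D.map h τ) ↔ D.lt N b c) ∧
        (D.lt (k + n) (D.map F ρ) (D.map H τ) ↔ D.lt N a c) := by
  obtain ⟨w₁, w₂, hw⟩ := exists_amalgamation g G
  obtain ⟨F, H, j, hF, hH⟩ := exists_compression (by omega) (f.trans w₁) (h.trans w₂)
  have hFH : Agrees (F.trans j) (H.trans j) πρ πτ p := by
    rw [hF, hH]
    refine ((agrees_trans_iff f g w₁).2 hfg).trans ?_ hpm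
    rw [hw]
    exact (agrees_trans_iff G h w₂).2 hGh
  refine ⟨F, H, (agrees_trans_iff F H j).1 hFH, _, D.map (f.trans w₁) ρ,
    D.map (g.trans w₁) σ, D.map (h.trans w₂) τ, ?_, ?_, ?_⟩
  · simp only [D.map_comp, D.map_lt_map_iff]
  · rw [hw]
    simp only [D.map_comp, D.map_lt_map_iff]
  · rw [← hF, ← hH]
    simp only [D.map_comp, D.map_lt_map_iff]

theorem stmt18_general (D : Predilator) {k m n : ℕ}
    (ρ : D.obj k) (σ : D.obj m) (τ : D.obj n)
    (πρ : Equiv.Perm (Fin k)) (πσ : Equiv.Perm (Fin m)) (πτ : Equiv.Perm (Fin n))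
    (p₁ p₂ p₃ : ℕ)
    (h₁ : MinSecure D ρ σ πρ πσ p₁) (h₂ : MinSecure D σ τ πσ πτ p₂)
    (h₃ : MinSecure D ρ τ πρ πτ p₃) :
    min p₁ p₂ ≤ p₃ := by
  by_contra! hlt
  have hp₃₁ : p₃ < p₁ := lt_min_iff.1 hlt |>.1
  obtain ⟨⟨f, g, hfg, hlt₁⟩, f', g', hfg', hnlt₁⟩ := h₁.exists_agrees_of_lt hp₃₁
  obtain ⟨⟨G, h, hGh, hlt₂⟩, G', h', hGh', hnlt₂⟩ :=
    h₂.exists_agrees_of_lt (lt_min_iff.1 hlt).2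
  obtain ⟨-, hp₁m, -⟩ := h₁.1.1
  have hp₃m : p₃ ≤ m := hp₃₁.le.trans hp₁m
  obtain ⟨F, H, hFH, _, a, b, c, hab, hbc, hac⟩ :=
    exists_agrees_amalgamation D ρ σ τ hp₃m hfg hGh
  obtain ⟨F', H', hFH', _, a', b', c', hab', hbc', hac'⟩ :=
    exists_agrees_amalgamation D ρ σ τ hp₃m hfg' hGh'
  have hlt₃ : D.lt (k + n) (D.map F ρ) (D.map H τ) :=
    hac.2 (D.lt_trans (hab.1 hlt₁) (hbc.1 hlt₂))
  exact D.not_lt_trans (mt hab'.2 hnlt₁) (mt hbc'.2 hnlt₂)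
    (hac'.1 ((h₃.1.2 F F' H H' hFH hFH').1 hlt₃))

/-- For three pairwise distinct trace elements `(ρ,k)`, `(σ,m)`, `(τ,n)` of a
predilator `D`, the minimal secure numbers satisfy `p_ρ^τ ≥ min (p_ρ^σ) (p_σ^τ)`. -/
theorem stmt18 (D : Predilator) {k m n : ℕ}
    (ρ : D.obj k) (σ : D.obj m) (τ : D.obj n)
    (hρ : D.supp k ρ = Finset.univ) (hσ : D.supp m σ = Finset.univ)
    (hτ : D.supp n τ = Finset.univ)
    (hρσ : ¬ (k = m ∧ HEq ρ σ)) (hστ : ¬ (m = n ∧ HEq σ τ))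
    (hρτ : ¬ (k = n ∧ HEq ρ τ))
    (πρ : Equiv.Perm (Fin k)) (πσ : Equiv.Perm (Fin m)) (πτ : Equiv.Perm (Fin n))
    (hπρ : IsPriorityPerm D ρ πρ) (hπσ : IsPriorityPerm D σ πσ)
    (hπτ : IsPriorityPerm D τ πτ)
    (p₁ p₂ p₃ : ℕ)
    (h₁ : MinSecure D ρ σ πρ πσ p₁) (h₂ : MinSecure D σ τ πσ πτ p₂)
    (h₃ : MinSecure D ρ τ πρ πτ p₃) :
    min p₁ p₂ ≤ p₃ :=
  stmt18_general D ρ σ τ πρ πσ πτ p₁ p₂ p₃ h₁ h₂ h₃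
end

section
/- Let D be a predilator and (σ,n) an element of its trace with priority permutation π_σ. For any linear order α and finite subsets a, b ⊆ α of size n, writing a^σ_i for the π_σ(i)-th element of a in increasing enumeration, the extension order satisfies: (σ,a) < (σ,b) in D̄(α) if and only if there is j < n with a^σ_j < b^σ_j and a^σ_i = b^σ_i for all i < j. -/
/-- The order embedding `Fin n ↪o Fin c.card` induced by the inclusion of a
finset `a ⊆ c` with `a.card = n` (the map `|ι_a|` on position indices). -/
noncomputable def inclEmb {α : Type*} [LinearOrder α] {n : ℕ} (a c : Finset α)
    (h : a ⊆ c) (ha : a.card = n) : Fin n ↪o Fin c.card :=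
  OrderEmbedding.ofStrictMono
    (fun i => (c.orderIsoOfFin rfl).symm
      ⟨(a.orderIsoOfFin ha i : α), h (a.orderIsoOfFin ha i).2⟩)
    (by
      intro i j hij
      exact (OrderIso.lt_iff_lt _).mpr (Subtype.mk_lt_mk.mpr ((a.orderIsoOfFin ha).lt_iff_lt.mpr hij)))

open Finset

instance (D : Predilator) (N : ℕ) : IsStrictTotalOrder (D.obj N) (D.lt N) := D.str N

namespace Predilator

theorem map_lt_map_iff_s19 (D : Predilator) {M N : ℕ} (u : Fin N ↪o Fin M) {x y : D.obj N} :
    D.lt M (D.map u x) (D.map u y) ↔ D.lt N x y := by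
  refine ⟨fun h => ?_, D.map_lt u x y⟩
  rcases trichotomous_of (D.lt N) x y with hxy | rfl | hyx
  · exact hxy
  · exact absurd h (irrefl _)
  · exact absurd h (asymm (D.map_lt u y x hyx))

variable {D : Predilator} {n : ℕ} {σ : D.obj n}

theorem map_injective_of_supp_eq_univ (hσ : D.supp n σ = univ) {N : ℕ}
    {f g : Fin n ↪o Fin N} (h : D.map f σ = D.map g σ) : f = g := by
  have hsupp := congrArg (D.supp N) h
  rw [D.supp_natural, D.supp_natural, hσ] at hsupp
  apply OrderEmbedding.range_inj.mp
  simpa [← Set.image_univ] using congrArg ((↑) : Finset (Fin N) → Set (Fin N)) hsupp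

theorem map_lt_map_of_le (hσ : D.supp n σ = univ) {N : ℕ} {f g : Fin n ↪o Fin N}
    (hle : ∀ x, f x ≤ g x) (hne : f ≠ g) : D.lt N (D.map f σ) (D.map g σ) := by
  rcases trichotomous_of (D.lt N) (D.map f σ) (D.map g σ) with hlt | heq | hgt
  · exact hlt
  · exact absurd (map_injective_of_supp_eq_univ hσ heq) hne
  · exact absurd hgt (D.monotone f g hle σ)

end Predilator

theorem val_eEmb {n : ℕ} (i x : Fin n) :
    (eEmb n i x : ℕ) = if x = i then 2 * (x : ℕ) + 1 else 2 * x := by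
  change ((if x = i then _ else _ : Fin (2 * n)) : ℕ) = _
  split_ifs <;> rfl

def doubleEmb (N : ℕ) : Fin N ↪o Fin (2 * N) :=
  OrderEmbedding.ofStrictMono (fun x => ⟨2 * x, by omega⟩) fun x y h => by
    simp only [Fin.mk_lt_mk]; omega

def doubleAddOne {N : ℕ} (x : Fin N) : Fin (2 * N) := ⟨2 * x + 1, by omega⟩

section Doubling

variable {N : ℕ} {x y : Fin N}

theorem doublval_eEmb (x : Fin N) : (doubleEmb N x : ℕ) = 2 * x := rfl

theorem doubleEmb_lt_doubleAddOne_iff : doubleEmb N x < doubleAddOne y ↔ x ≤ y := by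
  simp only [Fin.lt_def, Fin.le_def, doublval_eEmb, doubleAddOne]; omega

theorem doubleAddOne_lt_doubleEmb_iff : doubleAddOne x < doubleEmb N y ↔ x < y := by
  simp only [Fin.lt_def, doublval_eEmb, doubleAddOne]; omega

end Doubling

def interleave {β : Type*} [Preorder β] {n : ℕ} (lo hi : Fin n → β)
    (hlo : ∀ x, lo x < hi x) (hhi : ∀ x y, x < y → hi x < lo y) : Fin (2 * n) ↪o β :=
  OrderEmbedding.ofStrictMono
    (fun y => if (y : ℕ) % 2 = 0 then lo ⟨y / 2, by omega⟩ else hi ⟨y / 2, by omega⟩)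
    (by
      intro y z hyz
      have hy : (if (y : ℕ) % 2 = 0 then lo ⟨y / 2, by omega⟩ else hi ⟨y / 2, by omega⟩) ≤
          hi ⟨y / 2, by omega⟩ := by
        split_ifs
        exacts [(hlo _).le, le_rfl]
      have hz : lo ⟨z / 2, by omega⟩ ≤
          (if (z : ℕ) % 2 = 0 then lo ⟨z / 2, by omega⟩ else hi ⟨z / 2, by omega⟩) := by
        split_ifs
        exacts [le_rfl, (hlo _).le]
      by_cases hyz' : (y : ℕ) / 2 < z / 2
      · exact hy.trans_lt ((hhi _ _ (Fin.mk_lt_mk.mpr hyz')).trans_le hz)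
      · have hy2 : (y : ℕ) % 2 = 0 := by omega
        have hz2 : ¬ (z : ℕ) % 2 = 0 := by omega
        simp only [hy2, hz2, if_true, if_false]
        convert hlo ⟨y / 2, by omega⟩ using 3
        omega)

theorem interleave_eEmb {β : Type*} [Preorder β] {n : ℕ} (lo hi : Fin n → β)
    (hlo : ∀ x, lo x < hi x) (hhi : ∀ x y, x < y → hi x < lo y) (i x : Fin n) :
    interleave lo hi hlo hhi (eEmb n i x) = if x = i then hi x else lo x := by
  have hval := val_eEmb i x
  change (if ((eEmb n i x : Fin _) : ℕ) % 2 = 0 then _ else _) = _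
  by_cases hxi : x = i
  · rw [if_pos hxi] at hval ⊢
    rw [if_neg (by omega)]
    congr 1; ext; simp only; omega
  · rw [if_neg hxi] at hval ⊢
    rw [if_pos (by omega)]
    congr 1; ext; simp only; omega

section DescentFrame

variable {n N : ℕ} (f g : Fin n ↪o Fin N) {p : Fin n} (hp : g p < f p)
  (hmin : ∀ x < p, f x ≤ g x)

def descentFrame : Fin (2 * n) ↪o Fin (2 * N) :=
  interleave (fun x => doubleEmb N (if x = p then g p else f x))
    (fun x => if x = p then doubleEmb N (f p) else doubleAddOne (f x))
    (by
      intro x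
      split_ifs with hx
      · exact (doubleEmb N).lt_iff_lt.mpr (hx ▸ hp)
      · exact doubleEmb_lt_doubleAddOne_iff.mpr le_rfl)
    (by
      intro x y hxy
      by_cases hx : x = p
      · subst hx
        rw [if_pos rfl, if_neg hxy.ne']
        exact (doubleEmb N).lt_iff_lt.mpr (f.strictMono hxy)
      · rw [if_neg hx]
        refine doubleAddOne_lt_doubleEmb_iff.mpr ?_
        split_ifs with hy
        · exact (hmin x (hy ▸ hxy)).trans_lt (g.strictMono (hy ▸ hxy))
        · exact f.strictMono hxy)

theorem eEmb_trans_descentFrame_self :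
    (eEmb n p).trans (descentFrame f g hp hmin) = f.trans (doubleEmb N) := by
  refine DFunLike.ext _ _ fun x => ?_
  simp only [RelEmbedding.trans_apply, descentFrame, interleave_eEmb]
  split_ifs with hx
  · rw [hx]
  · rfl

theorem eEmb_trans_descentFrame_apply {k : Fin n} (hk : k ≠ p) (x : Fin n) :
    (eEmb n k).trans (descentFrame f g hp hmin) x =
      if x = k then doubleAddOne (f k) else doubleEmb N (if x = p then g p else f x) := by
  simp only [RelEmbedding.trans_apply, descentFrame, interleave_eEmb]
  split_ifs with hxk hxp
  · exact absurd (hxk ▸ hxp) hk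
  · rw [hxk]
  all_goals rfl

end DescentFrame

namespace Predilator

variable {D : Predilator} {n : ℕ} {σ : D.obj n} {π : Equiv.Perm (Fin n)}

theorem exists_descent_step (hπ : IsPriorityPerm D σ π) {N : ℕ} {f g : Fin n ↪o Fin N}
    (hlt : toLex (f ∘ π) < toLex (g ∘ π)) (hS : ({x | g x < f x} : Finset (Fin n)).Nonempty) :
    ∃ f' : Fin n ↪o Fin (2 * N),
      D.lt (2 * N) (D.map (f.trans (doubleEmb N)) σ) (D.map f' σ) ∧
      toLex (f' ∘ π) < toLex (g.trans (doubleEmb N) ∘ π) ∧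
      #{x | g.trans (doubleEmb N) x < f' x} < #{x | g x < f x} := by
  obtain ⟨j, hagree, hj⟩ := hlt
  simp only [Pi.toLex_apply, Function.comp_apply] at hagree hj
  set S : Finset (Fin n) := {x | g x < f x}
  have hmemS (x : Fin n) : x ∈ S ↔ g x < f x := by simp [S]
  set p := S.min' hS
  have hp : g p < f p := (hmemS p).mp (S.min'_mem hS)
  have hmin : ∀ x < p, f x ≤ g x := fun x hx =>
    not_lt.mp fun h => (S.min'_le x ((hmemS x).mpr h)).not_gt hx
  have hagree_ne (i : Fin n) (hi : i < j) : π i ≠ p := fun h => (hagree i hi ▸ h ▸ hp).false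
  have hjp : j < π.symm p := by
    rcases lt_trichotomy j (π.symm p) with h | h | h
    · exact h
    · rw [h, π.apply_symm_apply] at hj
      exact absurd hp (not_lt.mpr hj.le)
    · exact absurd (π.apply_symm_apply p) (hagree_ne _ h)
  have hkp : π j ≠ p := fun h => absurd hp (not_lt.mpr (h ▸ hj.le))
  have hf' := eEmb_trans_descentFrame_apply f g hp hmin hkp
  refine ⟨(eEmb n (π j)).trans (descentFrame f g hp hmin), ?_, ⟨j, fun i hi => ?_, ?_⟩, ?_⟩
  · have h := D.map_lt (descentFrame f g hp hmin) _ _ (hπ j _ hjp)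
    rwa [π.apply_symm_apply, ← D.map_comp, ← D.map_comp,
      eEmb_trans_descentFrame_self] at h
  · simp only [Pi.toLex_apply, Function.comp_apply, hf', if_neg (π.injective.ne hi.ne),
      if_neg (hagree_ne i hi), RelEmbedding.trans_apply, hagree i hi]
  · simp only [Pi.toLex_apply, Function.comp_apply, hf', if_pos, RelEmbedding.trans_apply]
    exact doubleAddOne_lt_doubleEmb_iff.mpr hj
  · refine card_lt_card (LE.le.trans_ssubset (fun x hx => ?_) (erase_ssubset (S.min'_mem hS)))
    simp only [mem_filter, mem_univ, true_and, RelEmbedding.trans_apply, hf'] at hx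
    rw [mem_erase, hmemS]
    split_ifs at hx with hxk hxp
    · exact absurd (doubleEmb_lt_doubleAddOne_iff.mp hx) (not_le.mpr (hxk ▸ hj))
    · exact absurd hx (hxp ▸ lt_irrefl _)
    · exact ⟨hxp, (doubleEmb N).lt_iff_lt.mp hx⟩

theorem map_lt_map_of_toLex_lt (hσ : D.supp n σ = univ) (hπ : IsPriorityPerm D σ π) {N : ℕ}
    {f g : Fin n ↪o Fin N} (hlt : toLex (f ∘ π) < toLex (g ∘ π)) :
    D.lt N (D.map f σ) (D.map g σ) := by
  obtain ⟨d, hd⟩ : ∃ d, #{x | g x < f x} = d := ⟨_, rfl⟩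
  induction d using Nat.strong_induction_on generalizing N f g with
  | _ d ih =>
    rcases eq_empty_or_nonempty ({x | g x < f x} : Finset (Fin n)) with hS | hS
    · have hle (x : Fin n) : f x ≤ g x := not_lt.mp (filter_eq_empty_iff.mp hS (mem_univ x))
      refine map_lt_map_of_le hσ hle ?_
      rintro rfl
      exact lt_irrefl _ hlt
    · obtain ⟨f', hff', hlt', hcard⟩ := exists_descent_step hπ hlt hS
      have h := trans_of (D.lt _) hff' (ih _ (hd ▸ hcard) hlt' rfl)
      rwa [D.map_comp, D.map_comp, map_lt_map_iff_s19] at h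

theorem map_lt_map_iff_toLex_lt (hσ : D.supp n σ = univ) (hπ : IsPriorityPerm D σ π) {N : ℕ}
    (f g : Fin n ↪o Fin N) :
    D.lt N (D.map f σ) (D.map g σ) ↔ toLex (f ∘ π) < toLex (g ∘ π) := by
  refine ⟨fun h => ?_, map_lt_map_of_toLex_lt hσ hπ⟩
  rcases lt_trichotomy (toLex (f ∘ π)) (toLex (g ∘ π)) with hlt | heq | hgt
  · exact hlt
  · obtain rfl : f = g := DFunLike.coe_injective (π.surjective.injective_comp_right heq)
    exact absurd h (irrefl _)
  · exact absurd (map_lt_map_of_toLex_lt hσ hπ hgt) (asymm h)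

end Predilator

section InclEmb

variable {α : Type*} [LinearOrder α] {m n : ℕ} {a b c : Finset α} (hac : a ⊆ c) (hbc : b ⊆ c)
  (ha : a.card = m) (hb : b.card = n) (i : Fin m) (j : Fin n)

theorem orderIsoOfFin_inclEmb :
    (c.orderIsoOfFin rfl (inclEmb a c hac ha i) : α) = a.orderIsoOfFin ha i := by
  change (c.orderIsoOfFin rfl ((c.orderIsoOfFin rfl).symm _) : α) = _
  rw [OrderIso.apply_symm_apply]

theorem inclEmb_lt_inclEmb_iff :
    inclEmb a c hac ha i < inclEmb b c hbc hb j ↔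
      (a.orderIsoOfFin ha i : α) < b.orderIsoOfFin hb j := by
  rw [← orderIsoOfFin_inclEmb hac ha, ← orderIsoOfFin_inclEmb hbc hb, Subtype.coe_lt_coe,
    OrderIso.lt_iff_lt]

theorem inclEmb_eq_inclEmb_iff :
    inclEmb a c hac ha i = inclEmb b c hbc hb j ↔
      (a.orderIsoOfFin ha i : α) = b.orderIsoOfFin hb j := by
  rw [← orderIsoOfFin_inclEmb hac ha, ← orderIsoOfFin_inclEmb hbc hb, Subtype.coe_inj,
    EmbeddingLike.apply_eq_iff_eq]

end InclEmb

/-- Girard's comparison of `(σ,a)` and `(σ,b)` in the extension `D̄(α)`: for a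
trace element `(σ,n)` with priority permutation `π_σ` and finsets `a, b ⊆ α` of
size `n`, we have `(σ,a) < (σ,b)` iff there is `j < n` with `a^σ_j < b^σ_j` and
`a^σ_i = b^σ_i` for all `i < j`. -/
theorem stmt19 {α : Type*} [LinearOrder α] (D : Predilator) {n : ℕ}
    (σ : D.obj n) (hσ : D.supp n σ = Finset.univ)
    (πσ : Equiv.Perm (Fin n)) (hπσ : IsPriorityPerm D σ πσ)
    (a b : Finset α) (ha : a.card = n) (hb : b.card = n) :
    D.lt (a ∪ b).card
        (D.map (inclEmb a (a ∪ b) Finset.subset_union_left ha) σ)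
        (D.map (inclEmb b (a ∪ b) Finset.subset_union_right hb) σ) ↔
      ∃ j : Fin n, (a.orderIsoOfFin ha (πσ j) : α) < (b.orderIsoOfFin hb (πσ j) : α) ∧
        ∀ i : Fin n, i < j →
          (a.orderIsoOfFin ha (πσ i) : α) = (b.orderIsoOfFin hb (πσ i) : α) := by
  rw [Predilator.map_lt_map_iff_toLex_lt hσ hπσ]
  have hlt := inclEmb_lt_inclEmb_iff subset_union_left subset_union_right ha hb
  have heq := inclEmb_eq_inclEmb_iff subset_union_left subset_union_right ha hb
  exact exists_congr fun j =>
    and_comm.trans (and_congr (hlt _ _) (forall₂_congr fun i _ => heq _ _))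
end
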